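/- arXiv:2605.16803 — 6 statements merged into one kernel-verified Lean document; each statement's English description precedes it below -/
import Mathlib

section
/- Let n ≥ 1. Every invertible real n×n matrix g can be written as g = u · d · k, where u is an upper-triangular real n×n matrix with all diagonal entries equal to 1, d is a diagonal real n×n matrix with strictly positive diagonal entries, and k is an orthogonal real n×n matrix (kᵀk = I). (Existence part of the Iwasawa decomposition of GL(n,ℝ).) -/
open Matrix

/-- `g * gᵀ` is positive definite for invertible real `g`. -/
lemma posDef_mul_transpose_self_aux {n : ℕ} (h : Matrix (Fin n) (Fin n) ℝ)
    (hh : IsUnit h.det) : (h * hᵀ).PosDef := by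
  refine PosDef.of_dotProduct_mulVec_pos ?_ ?_
  · show (h * hᵀ)ᴴ = h * hᵀ
    rw [conjTranspose_eq_transpose_of_trivial, transpose_mul, transpose_transpose]
  · intro x hx
    have hdet : IsUnit hᵀ.det := by rwa [det_transpose]
    have hinj : Function.Injective (hᵀ.mulVec) :=
      mulVec_injective_iff_isUnit.2 ((Matrix.isUnit_iff_isUnit_det hᵀ).mpr hdet)
    have hx2 : hᵀ *ᵥ x ≠ 0 := by
      intro H
      exact hx (hinj (by simpa using H))
    have h1 : star x ⬝ᵥ ((h * hᵀ) *ᵥ x) = star (hᵀ *ᵥ x) ⬝ᵥ (hᵀ *ᵥ x) := by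
      rw [star_trivial, star_trivial, ← mulVec_mulVec, dotProduct_mulVec, ← mulVec_transpose]
    rw [h1]
    exact dotProduct_star_self_pos_iff.2 hx2

/-- The UDUᵀ-type decomposition extracted from the LDL decomposition: any real positive
definite matrix `S` equals `N * (diagonal e)² * Nᵀ` with `N` unit lower triangular and
`e` strictly positive. -/
lemma ldl_sqrt_decomp_aux {m : Type*} [Fintype m] [LinearOrder m]
    [WellFoundedLT m] [LocallyFiniteOrderBot m] {S : Matrix m m ℝ} (hS : S.PosDef) :
    ∃ (N : Matrix m m ℝ) (e : m → ℝ),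
      (∀ i j : m, i < j → N i j = 0) ∧ (∀ i : m, N i i = 1) ∧ (∀ i : m, 0 < e i) ∧
      N * (diagonal e * diagonal e) * Nᵀ = S := by
  classical
  set L : Matrix m m ℝ := LDL.lower hS with hLdef
  set Dent : m → ℝ := LDL.diagEntries hS with hDentdef
  have hLinvT : (LDL.lowerInv hS).BlockTriangular (OrderDual.toDual : m → mᵒᵈ) :=
    fun i j hij => LDL.lowerInv_triangular hS hij
  have hLT : L.BlockTriangular (OrderDual.toDual : m → mᵒᵈ) :=
    blockTriangular_inv_of_blockTriangular hLinvT
  have hLtri : ∀ i j : m, i < j → L i j = 0 := fun i j hij => hLT hij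
  -- diagonal entries of L are nonzero
  have hLdiag : ∀ i : m, L i i ≠ 0 := by
    intro i
    have h1 : (L * LDL.lowerInv hS) i i = 1 := by
      rw [hLdef, LDL.lower, Matrix.inv_mul_of_invertible]
      simp [Matrix.one_apply]
    rw [mul_apply] at h1
    have h2 : ∑ k, L i k * LDL.lowerInv hS k i = L i i * LDL.lowerInv hS i i :=
      Finset.sum_eq_single i
        (fun k _ hk => by
          rcases hk.lt_or_gt with hlt | hlt
          · rw [LDL.lowerInv_triangular hS hlt, mul_zero]
          · rw [hLtri i k hlt, zero_mul])
        (fun h => absurd (Finset.mem_univ i) h)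
    rw [h2] at h1
    exact left_ne_zero_of_mul_eq_one h1
  -- diagonal entries of D are positive
  have hDent : ∀ i : m, 0 < Dent i := by
    intro i
    have hrow : LDL.lowerInv hS i ≠ 0 := by
      intro h0
      have h1 : (LDL.lowerInv hS * (LDL.lowerInv hS)⁻¹) i i = 1 := by
        rw [Matrix.mul_inv_of_invertible]
        simp [Matrix.one_apply]
      rw [mul_apply] at h1
      have hz : ∀ k, LDL.lowerInv hS i k = 0 := fun k => by rw [h0]; rfl
      simp [hz] at h1
    have key : Dent i =
        star (star (LDL.lowerInv hS i)) ⬝ᵥ (S *ᵥ star (LDL.lowerInv hS i)) := by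
      rw [hDentdef]; exact dotProduct_comm _ _
    rw [key, star_trivial, star_trivial]
    exact hS.dotProduct_mulVec_pos hrow
  -- the unit lower triangular factor
  set M0 : Matrix m m ℝ := L * diagonal (fun i => (L i i)⁻¹) with hM0def
  have hM0app : ∀ i j : m, M0 i j = L i j * (L j j)⁻¹ := fun i j => by
    rw [hM0def, mul_diagonal]
  have harg : ∀ j : m, 0 < (L j j) ^ 2 * Dent j := fun j =>
    mul_pos (lt_of_le_of_ne (sq_nonneg _) (Ne.symm (pow_ne_zero 2 (hLdiag j)))) (hDent j)
  set c : m → ℝ := fun i => Real.sqrt ((L i i) ^ 2 * Dent i) with hcdef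
  refine ⟨M0, c, fun i j hij => by rw [hM0app, hLtri i j hij, zero_mul],
    fun i => by rw [hM0app, mul_inv_cancel₀ (hLdiag i)],
    fun i => Real.sqrt_pos.2 (harg i), ?_⟩
  have hdd : diagonal c * diagonal c = diagonal fun i => (L i i) ^ 2 * Dent i := by
    rw [diagonal_mul_diagonal]
    exact congrArg Matrix.diagonal (funext fun i => Real.mul_self_sqrt (le_of_lt (harg i)))
  rw [hdd]
  have hd3 : (diagonal fun i => (L i i)⁻¹) * (diagonal fun i => (L i i) ^ 2 * Dent i)
      * (diagonal fun i => (L i i)⁻¹) = diagonal Dent := by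
    rw [diagonal_mul_diagonal, diagonal_mul_diagonal]
    exact congrArg Matrix.diagonal (funext fun i => by field_simp [hLdiag i])
  have h1 : M0 * (diagonal fun i => (L i i) ^ 2 * Dent i) * M0ᵀ
      = L * diagonal Dent * Lᵀ := by
    have h0 : M0 * (diagonal fun i => (L i i) ^ 2 * Dent i) * M0ᵀ
        = L * ((diagonal fun i => (L i i)⁻¹) * (diagonal fun i => (L i i) ^ 2 * Dent i)
          * (diagonal fun i => (L i i)⁻¹) * Lᵀ) := by
      rw [hM0def, transpose_mul, diagonal_transpose]
      simp only [Matrix.mul_assoc]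
    rw [h0, hd3, Matrix.mul_assoc]
  rw [h1]
  have hdiag : LDL.diag hS = diagonal Dent := rfl
  have h2 := LDL.lower_conj_diag hS
  rw [conjTranspose_eq_transpose_of_trivial, hdiag] at h2
  exact h2

/-- **Existence of the Iwasawa decomposition of `GL(n,ℝ)`.**
Every invertible real `n × n` matrix `g` can be written as `g = u * d * k`, where `u` is
upper triangular with all diagonal entries equal to `1`, `d` is diagonal with strictly
positive diagonal entries, and `k` is orthogonal (`k.transpose * k = 1`). -/
theorem iwasawa_existence (n : ℕ) (hn : 1 ≤ n)
    (g : Matrix (Fin n) (Fin n) ℝ) (hg : IsUnit g.det) :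
    ∃ u d k : Matrix (Fin n) (Fin n) ℝ,
      (∀ a b : Fin n, b < a → u a b = 0) ∧ (∀ a : Fin n, u a a = 1) ∧
      d.IsDiag ∧ (∀ a : Fin n, 0 < d a a) ∧
      k.transpose * k = 1 ∧ g = u * d * k := by
  classical
  set σ : Equiv.Perm (Fin n) := Fin.revPerm with hσ
  have hσσ : ∀ i, σ (σ i) = i := fun i => by simp [hσ, Fin.rev_rev]
  have hσlt : ∀ i j : Fin n, j < i → σ i < σ j := fun i j hij => by
    simpa [hσ, Fin.rev_lt_rev] using hij
  set g' : Matrix (Fin n) (Fin n) ℝ := g.submatrix σ id with hg'def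
  have hg' : IsUnit g'.det := by
    rw [hg'def, det_permute]
    exact ((Equiv.Perm.sign σ).isUnit.map (Int.castRingHom ℝ)).mul hg
  have hS : (g' * g'ᵀ).PosDef := posDef_mul_transpose_self_aux g' hg'
  obtain ⟨N, e, hNtri, hNdiag, he, hNe⟩ :=
    @ldl_sqrt_decomp_aux (Fin n) _ _ (inferInstance : WellFoundedLT (Fin n)) _ _ hS
  have hNe' : N * (diagonal e * diagonal e) * Nᵀ = g' * g'ᵀ := by
    convert hNe using 2
  set u : Matrix (Fin n) (Fin n) ℝ := N.submatrix σ σ with hudef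
  set d : Matrix (Fin n) (Fin n) ℝ := diagonal (fun i => e (σ i)) with hddef
  -- key identity : u * (d * d) * uᵀ = g * gᵀ
  have hdd : d * d = (diagonal e * diagonal e).submatrix σ σ := by
    rw [hddef, diagonal_mul_diagonal, diagonal_mul_diagonal]
    ext i j
    rcases eq_or_ne i j with rfl | hij
    · rw [submatrix_apply, diagonal_apply_eq, diagonal_apply_eq]
    · rw [submatrix_apply, diagonal_apply_ne _ hij,
        diagonal_apply_ne _ (fun h => hij (σ.injective h))]
  have hsub : g' * g'ᵀ = (g * gᵀ).submatrix σ σ := by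
    rw [hg'def, transpose_submatrix]
    exact (submatrix_mul g gᵀ σ id σ Function.bijective_id).symm
  have hkey : u * (d * d) * uᵀ = g * gᵀ := by
    rw [hudef, hdd, transpose_submatrix, submatrix_mul_equiv, submatrix_mul_equiv, hNe', hsub]
    ext i j
    simp [submatrix_apply, hσσ]
  -- invertibility
  have hu_det : u.det = 1 := by
    have ht : u.BlockTriangular id := fun i j hij => by
      rw [hudef, submatrix_apply]
      exact hNtri (σ i) (σ j) (hσlt i j hij)
    rw [det_of_upperTriangular ht]
    exact Finset.prod_eq_one fun i _ => by rw [hudef, submatrix_apply, hNdiag]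
  haveI : Invertible u := u.invertibleOfIsUnitDet (by rw [hu_det]; exact isUnit_one)
  haveI : Invertible d := d.invertibleOfIsUnitDet (by
    rw [hddef, det_diagonal]
    exact isUnit_iff_ne_zero.2 (ne_of_gt (Finset.prod_pos fun i _ => he (σ i))))
  haveI : Invertible g := g.invertibleOfIsUnitDet hg
  set t : Matrix (Fin n) (Fin n) ℝ := u⁻¹ * g with htdef
  haveI : Invertible t := htdef ▸ invertibleMul u⁻¹ g
  have hdT : dᵀ = d := by rw [hddef, diagonal_transpose]
  -- t * tᵀ = d * d
  have htt : t * tᵀ = d * d := by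
    have h1 : t * tᵀ = u⁻¹ * (g * gᵀ * (uᵀ)⁻¹) := by
      rw [htdef, transpose_mul, transpose_nonsing_inv]
      simp only [Matrix.mul_assoc]
    rw [h1, ← hkey, Matrix.mul_inv_cancel_right_of_invertible,
      Matrix.inv_mul_cancel_left_of_invertible]
  have htT : tᵀ = t⁻¹ * (d * d) :=
    ((Matrix.inv_mul_eq_iff_eq_mul_of_invertible t (d * d) tᵀ).mpr htt.symm).symm
  refine ⟨u, d, d⁻¹ * t, ?_, ?_, ?_, ?_, ?_, ?_⟩
  · intro a b hba
    rw [hudef, submatrix_apply]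
    exact hNtri (σ a) (σ b) (hσlt a b hba)
  · intro a
    rw [hudef, submatrix_apply]
    exact hNdiag (σ a)
  · rw [hddef]; exact isDiag_diagonal _
  · intro a
    rw [hddef, diagonal_apply_eq]
    exact he (σ a)
  · -- orthogonality
    rw [transpose_mul, transpose_nonsing_inv, hdT, htT,
      Matrix.mul_assoc t⁻¹ (d * d) d⁻¹, Matrix.mul_inv_cancel_right_of_invertible,
      Matrix.mul_assoc t⁻¹ d, Matrix.mul_inv_cancel_left_of_invertible,
      Matrix.inv_mul_of_invertible]
  · -- g = u * d * k
    rw [htdef, Matrix.mul_assoc u d, Matrix.mul_inv_cancel_left_of_invertible,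
      Matrix.mul_inv_cancel_left_of_invertible]
end

section
/- Path-matrix formula: with the setup below, for every t = (t₁,…,t_m) ∈ ℝᵐ with t_j ≠ −1 whenever i_j = i_{j+1}, and for all 1 ≤ v, w ≤ n, the (v,w) entry of A(t)⁻¹ satisfies a_{v,w}(t) = Σ over all subsets S ⊆ {1,…,m} that generate a path from v to w of (∏_{j∈S}(−t_j)) · (∏_{j∈S with i_j = i_{j+1}} (1+t_j)⁻¹). -/
open scoped Classical

noncomputable section

/-- The matrix `A(t) = (I + tₘ E_{iₘ,i_{m+1}}) ⋯ (I + t₁ E_{i₁,i₂})`, where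
`E_{a,b}` is the elementary matrix with `1` in entry `(a,b)` and `i_{m+1} := i₁`
(realized by the wrap-around addition `j + 1` in `Fin m`). -/
def Amat (n m : ℕ) [NeZero m] (i : Fin m → Fin n) (t : Fin m → ℝ) :
    Matrix (Fin n) (Fin n) ℝ :=
  ((List.finRange m).reverse.map
    (fun j => (1 : Matrix (Fin n) (Fin n) ℝ) + t j • Matrix.single (i j) (i (j + 1)) 1)).prod

/-- `S ⊆ {1,…,m}` generates a path from `v` to `w`: the ordered product (in increasing
order of the indices in `S`) of the elementary matrices `E_{i_j, i_{j+1}}` equals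
`E_{v,w}`; by convention the empty set generates a path from `v` to `v` for every `v`. -/
def genPath (n m : ℕ) [NeZero m] (i : Fin m → Fin n) (S : Finset (Fin m)) (v w : Fin n) :
    Prop :=
  if S = ∅ then v = w
  else ((Finset.sort S (· ≤ ·)).map
      (fun j => Matrix.single (i j) (i (j + 1)) (1 : ℝ))).prod
    = Matrix.single v w 1

section Aux

variable {R : Type*} [Ring R] {α : Type*}

lemma aux_prod_reverse_mul (f g : α → R) :
    ∀ l : List α, (∀ j ∈ l, f j * g j = 1) →
      (l.reverse.map f).prod * (l.map g).prod = 1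
  | [], _ => by simp
  | a :: l, h => by
    simp only [List.reverse_cons, List.map_append, List.prod_append, List.map_cons,
      List.prod_cons, List.map_nil, List.prod_nil, mul_one]
    rw [mul_assoc, ← mul_assoc (f a), h a (List.mem_cons_self), one_mul]
    exact aux_prod_reverse_mul f g l (fun j hj => h j (List.mem_cons_of_mem a hj))

lemma aux_prod_one_add [DecidableEq α] [LinearOrder α] (f : α → R) :
    ∀ l : List α, l.Pairwise (· < ·) →
      (l.map (fun j => 1 + f j)).prod
        = ∑ S ∈ l.toFinset.powerset, ((Finset.sort S (· ≤ ·)).map f).prod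
  | [], _ => by simp
  | a :: l, h => by
    have hmem : ∀ b ∈ l.toFinset, a < b := by
      intro b hb; exact (List.pairwise_cons.mp h).1 b (List.mem_toFinset.mp hb)
    have ha : a ∉ l.toFinset := fun hb => lt_irrefl a (hmem a hb)
    rw [List.map_cons, List.prod_cons, List.toFinset_cons,
      Finset.sum_powerset_insert ha, aux_prod_one_add f l (List.pairwise_cons.mp h).2,
      add_mul, one_mul]
    congr 1
    rw [Finset.mul_sum]
    refine Finset.sum_congr rfl fun S hS => ?_
    have haS : a ∉ S := fun h' => ha (Finset.mem_powerset.mp hS h')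
    rw [Finset.sort_insert (· ≤ ·)
        (fun b hb => le_of_lt (hmem b (Finset.mem_powerset.mp hS hb))) haS,
      List.map_cons, List.prod_cons]

lemma aux_prod_smul {n : ℕ} (c : α → ℝ) (M : α → Matrix (Fin n) (Fin n) ℝ) :
    ∀ l : List α,
      (l.map (fun j => c j • M j)).prod = (l.map c).prod • (l.map M).prod
  | [] => by simp
  | a :: l => by
    rw [List.map_cons, List.prod_cons, List.map_cons, List.prod_cons, List.map_cons,
      List.prod_cons, aux_prod_smul c M l, smul_mul_smul_comm]

lemma aux_stdBasis_mul_prod {n : ℕ} :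
    ∀ (e : List (Fin n × Fin n)) (a b : Fin n),
      Matrix.single a b (1 : ℝ) *
          (e.map (fun p => Matrix.single p.1 p.2 (1 : ℝ))).prod = 0
      ∨ ∃ d, Matrix.single a b (1 : ℝ) *
          (e.map (fun p => Matrix.single p.1 p.2 (1 : ℝ))).prod
          = Matrix.single a d (1 : ℝ)
  | [], a, b => by right; exact ⟨b, by simp⟩
  | p :: e, a, b => by
    rw [List.map_cons, List.prod_cons, ← mul_assoc]
    by_cases hb : b = p.1
    · subst hb
      rw [Matrix.single_mul_single_same, one_mul]
      exact aux_stdBasis_mul_prod e a p.2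
    · left
      rw [Matrix.single_mul_single_of_ne (c := (1 : ℝ)) a b p.1 hb (1 : ℝ), zero_mul]

end Aux

lemma aux_entry {n m : ℕ} [NeZero m] (i : Fin m → Fin n) (S : Finset (Fin m)) (v w : Fin n) :
    ((Finset.sort S (· ≤ ·)).map
        (fun j => Matrix.single (i j) (i (j + 1)) (1 : ℝ))).prod v w
      = if genPath n m i S v w then 1 else 0 := by
  by_cases hS : S = ∅
  · subst hS
    simp [genPath, Matrix.one_apply]
  · have hgen : genPath n m i S v w ↔
        ((Finset.sort S (· ≤ ·)).map
          (fun j => Matrix.single (i j) (i (j + 1)) (1 : ℝ))).prod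
        = Matrix.single v w 1 := by
      simp [genPath, hS]
    have hsort : Finset.sort S (· ≤ ·) ≠ [] := by
      intro h
      apply hS
      rw [← Finset.sort_toFinset S (· ≤ ·), h, List.toFinset_nil]
    obtain ⟨j0, rest, hL⟩ := List.exists_cons_of_ne_nil hsort
    have hP : ((Finset.sort S (· ≤ ·)).map
          (fun j => Matrix.single (i j) (i (j + 1)) (1 : ℝ))).prod
        = Matrix.single (i j0) (i (j0 + 1)) 1 *
          (rest.map (fun j => Matrix.single (i j) (i (j + 1)) (1 : ℝ))).prod := by
      rw [hL, List.map_cons, List.prod_cons]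
    have hstruct := aux_stdBasis_mul_prod (rest.map (fun j => (i j, i (j + 1))))
      (i j0) (i (j0 + 1))
    rw [List.map_map] at hstruct
    have hcomp : ((fun p : Fin n × Fin n => Matrix.single p.1 p.2 (1 : ℝ)) ∘
        (fun j => (i j, i (j + 1)))) = fun j => Matrix.single (i j) (i (j + 1)) (1 : ℝ) :=
      rfl
    rw [hcomp] at hstruct
    rcases hstruct with h0 | ⟨d, hd⟩
    · rw [hP, h0, if_neg]
      · simp
      · rw [hgen, hP, h0]
        intro h
        have h' := congrFun (congrFun h v) w
        rw [Matrix.single_apply_same] at h'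
        simp at h'
    · rw [hP, hd]
      by_cases hvw : i j0 = v ∧ d = w
      · obtain ⟨h1, h2⟩ := hvw
        subst h1
        subst h2
        rw [if_pos (hgen.mpr (hP.trans hd)), Matrix.single_apply_same]
      · rw [Matrix.single_apply_of_ne (h := hvw), if_neg]
        rw [hgen, hP, hd]
        intro h
        have h' := congrFun (congrFun h (i j0)) d
        rw [Matrix.single_apply_same,
          Matrix.single_apply_of_ne
            (h := fun hc => hvw ⟨hc.1.symm, hc.2.symm⟩)] at h'
        exact one_ne_zero h'

lemma aux_factor {n : ℕ} (A : Matrix (Fin n) (Fin n) ℝ) (s c : ℝ) :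
    ((1 : Matrix (Fin n) (Fin n) ℝ) + s • A) * (1 + c • A)
      = 1 + (c + s) • A + (s * c) • (A * A) := by
  simp only [mul_add, add_mul, mul_one, one_mul, smul_mul_smul_comm, add_smul]
  abel

/-- **Path-matrix formula.**  For admissible `t` (i.e. `t j ≠ −1` whenever
`i_j = i_{j+1}`) and all `v, w`, the `(v,w)` entry of `A(t)⁻¹` equals the sum, over all
subsets `S ⊆ {1,…,m}` generating a path from `v` to `w`, of
`(∏_{j ∈ S} (−t_j)) ⬝ (∏_{j ∈ S, i_j = i_{j+1}} (1 + t_j)⁻¹)`. -/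
theorem path_matrix_formula (n m : ℕ) (hn : 1 ≤ n) [NeZero m] (i : Fin m → Fin n)
    (t : Fin m → ℝ) (ht : ∀ j : Fin m, i j = i (j + 1) → t j ≠ -1) (v w : Fin n) :
    (Amat n m i t)⁻¹ v w =
      ∑ S ∈ (Finset.univ : Finset (Finset (Fin m))).filter
          (fun S => genPath n m i S v w),
        (∏ j ∈ S, (-t j)) * ∏ j ∈ S.filter (fun j => i j = i (j + 1)), (1 + t j)⁻¹ := by
  classical
  set c : Fin m → ℝ := fun j => if i j = i (j + 1) then -t j * (1 + t j)⁻¹ else -t j with hc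
  have hinv : (Amat n m i t)⁻¹
      = ((List.finRange m).map
          (fun j => (1 : Matrix (Fin n) (Fin n) ℝ) +
            c j • Matrix.single (i j) (i (j + 1)) 1)).prod := by
    apply Matrix.inv_eq_right_inv
    unfold Amat
    apply aux_prod_reverse_mul
    intro j _
    beta_reduce
    rw [aux_factor]
    by_cases hij : i j = i (j + 1)
    · have h1 : (1 : ℝ) + t j ≠ 0 := fun h0 => ht j hij (by linarith)
      have hEE : Matrix.single (i j) (i (j + 1)) (1 : ℝ) *
          Matrix.single (i j) (i (j + 1)) (1 : ℝ)
          = Matrix.single (i j) (i (j + 1)) (1 : ℝ) := by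
        simp [← hij]
      have key : c j + t j + t j * c j = 0 := by
        simp only [hc, if_pos hij]
        field_simp
        ring
      rw [hEE, add_assoc, ← add_smul, key, zero_smul, add_zero]
    · have hEE : Matrix.single (i j) (i (j + 1)) (1 : ℝ) *
          Matrix.single (i j) (i (j + 1)) (1 : ℝ) = 0 :=
        Matrix.single_mul_single_of_ne (c := (1 : ℝ)) (i j) (i (j + 1)) (i j) (fun h => hij h.symm) (1 : ℝ)
      have key : c j + t j = 0 := by
        simp [hc, if_neg hij]
      rw [hEE, smul_zero, add_zero, key, zero_smul, add_zero]
  rw [hinv,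
    aux_prod_one_add (fun j => c j • Matrix.single (i j) (i (j + 1)) (1 : ℝ))
      (List.finRange m) (List.pairwise_lt_finRange m),
    List.toFinset_finRange, Finset.powerset_univ, Matrix.sum_apply, Finset.sum_filter]
  refine Finset.sum_congr rfl fun S _ => ?_
  rw [aux_prod_smul c (fun j => Matrix.single (i j) (i (j + 1)) (1 : ℝ))
      (Finset.sort S (· ≤ ·)),
    Matrix.smul_apply, smul_eq_mul, aux_entry i S v w, mul_ite, mul_one, mul_zero]
  by_cases hgp : genPath n m i S v w
  · rw [if_pos hgp, if_pos hgp]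
    have hperm : ((Finset.sort S (· ≤ ·)).map c).prod = (S.toList.map c).prod :=
      List.Perm.prod_eq (List.Perm.map c (Finset.sort_perm_toList S (· ≤ ·)))
    rw [hperm, Finset.prod_map_toList]
    have h1 : ∀ j ∈ S, c j = (-t j) * (if i j = i (j + 1) then (1 + t j)⁻¹ else 1) := by
      intro j _
      by_cases hij : i j = i (j + 1) <;> simp [hc, hij]
    rw [Finset.prod_congr rfl h1, Finset.prod_mul_distrib, ← Finset.prod_filter]
  · rw [if_neg hgp, if_neg hgp]


end
end

section
/- With the setup below, for every subset S ⊆ {1,…,m} and all 1 ≤ v, w ≤ n: ∂_S a_{v,w}(0) = (−1)^{|S|} if S generates a path from v to w, and ∂_S a_{v,w}(0) = 0 otherwise. -/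
open scoped Classical

noncomputable section

/-- Mixed partial derivative with respect to the variables indexed by `S`
(in increasing order of index), as a function of the base point.
For `S = ∅` it is the function itself. -/
def mpd {m : ℕ} {F : Type*} [NormedAddCommGroup F] [NormedSpace ℝ F]
    (S : Finset (Fin m)) (f : (Fin m → ℝ) → F) : (Fin m → ℝ) → F :=
  (Finset.sort S (· ≤ ·)).foldr
    (fun j h x => deriv (fun s : ℝ => h (Function.update x j s)) (x j)) f


namespace EDF

variable {m n : ℕ}

/-- one derivative step, matching `mpd`'s foldr function -/
def step {F : Type*} [NormedAddCommGroup F] [NormedSpace ℝ F] (j : Fin m)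
    (h : (Fin m → ℝ) → F) (x : Fin m → ℝ) : F :=
  deriv (fun s : ℝ => h (Function.update x j s)) (x j)

lemma foldr_congr {F : Type*} [NormedAddCommGroup F] [NormedSpace ℝ F]
    (L : List (Fin m)) {U : Set (Fin m → ℝ)} (hU : IsOpen U)
    {f g : (Fin m → ℝ) → F} (hfg : ∀ x ∈ U, f x = g x) :
    ∀ x ∈ U, L.foldr step f x = L.foldr step g x := by
  induction L with
  | nil => exact hfg
  | cons j L ih =>
    intro x hx
    simp only [List.foldr_cons]
    show deriv (fun s : ℝ => L.foldr step f (Function.update x j s)) (x j)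
      = deriv (fun s : ℝ => L.foldr step g (Function.update x j s)) (x j)
    apply Filter.EventuallyEq.deriv_eq
    have hc : Continuous (fun s : ℝ => Function.update x j s) :=
      continuous_const.update j continuous_id
    have hev : ∀ᶠ s in nhds (x j), Function.update x j s ∈ U := by
      have h0 : Function.update x j (x j) = x := Function.update_eq_self _ _
      exact (hc.continuousAt (x := x j)).preimage_mem_nhds
        (hU.mem_nhds (by rwa [h0]))
    filter_upwards [hev] with s hs
    exact ih _ hs

lemma foldr_sum_prod (ψ : Fin m → ℝ → ℝ) (O : Fin m → Set ℝ) (hO : ∀ j, IsOpen (O j))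
    (hψ : ∀ j, ∀ s ∈ O j, DifferentiableAt ℝ (ψ j) s)
    (c : Finset (Fin m) → ℝ) :
    ∀ (L : List (Fin m)), L.Nodup →
      ∀ (x : Fin m → ℝ), (∀ j, x j ∈ O j) →
      L.foldr step (fun t => ∑ T : Finset (Fin m), c T * ∏ j ∈ T, ψ j (t j)) x
      = ∑ T : Finset (Fin m),
          if ∀ j ∈ L, j ∈ T then
            c T * ∏ j ∈ T, (if j ∈ L then deriv (ψ j) (x j) else ψ j (x j))
          else 0 := by
  intro L
  induction L with
  | nil =>
    intro _ x _
    simp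
  | cons j L ih =>
    intro hnd x hx
    have hjL : j ∉ L := by simp [List.nodup_cons] at hnd; exact hnd.1
    have hndL : L.Nodup := (List.nodup_cons.mp hnd).2
    simp only [List.foldr_cons]
    show deriv (fun s : ℝ => L.foldr step _ (Function.update x j s)) (x j) = _
    have hev : ∀ s ∈ O j,
        L.foldr step (fun t => ∑ T : Finset (Fin m), c T * ∏ k ∈ T, ψ k (t k))
          (Function.update x j s)
        = ∑ T : Finset (Fin m),
            if ∀ k ∈ L, k ∈ T then
              c T * ∏ k ∈ T,
                (if k ∈ L then deriv (ψ k) (Function.update x j s k)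
                 else ψ k (Function.update x j s k))
            else 0 := by
      intro s hs
      refine ih hndL _ (fun k => ?_)
      by_cases hk : k = j
      · subst hk; simpa using hs
      · simpa [Function.update_of_ne hk] using hx k
    set D : Finset (Fin m) → ℝ := fun T =>
      if ∀ k ∈ j :: L, k ∈ T then
        c T * ∏ k ∈ T, (if k ∈ j :: L then deriv (ψ k) (x k) else ψ k (x k))
      else 0 with hD
    have hDif : ∀ T, D T = if ∀ k ∈ j :: L, k ∈ T then
        c T * ∏ k ∈ T, (if k ∈ j :: L then deriv (ψ k) (x k) else ψ k (x k))
      else 0 := fun T => rfl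
    have hder : ∀ T : Finset (Fin m),
        HasDerivAt (fun s : ℝ =>
          if ∀ k ∈ L, k ∈ T then
            c T * ∏ k ∈ T,
              (if k ∈ L then deriv (ψ k) (Function.update x j s k)
               else ψ k (Function.update x j s k))
          else 0) (D T) (x j) := by
      intro T
      by_cases hLT : ∀ k ∈ L, k ∈ T
      · by_cases hjT : j ∈ T
        · have hC : ∀ s : ℝ, (∏ k ∈ T,
              (if k ∈ L then deriv (ψ k) (Function.update x j s k)
               else ψ k (Function.update x j s k)))
              = ψ j s * ∏ k ∈ T.erase j,
                  (if k ∈ L then deriv (ψ k) (x k) else ψ k (x k)) := by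
            intro s
            rw [← Finset.mul_prod_erase T _ hjT]
            congr 1
            · simp [hjL]
            · refine Finset.prod_congr rfl (fun k hk => ?_)
              have : k ≠ j := Finset.ne_of_mem_erase hk
              simp [Function.update_of_ne this]
          have hd : HasDerivAt (fun s : ℝ => c T * (ψ j s *
              ∏ k ∈ T.erase j, (if k ∈ L then deriv (ψ k) (x k) else ψ k (x k))))
              (c T * (deriv (ψ j) (x j) *
              ∏ k ∈ T.erase j, (if k ∈ L then deriv (ψ k) (x k) else ψ k (x k)))) (x j) := by
            exact ((hψ j (x j) (hx j)).hasDerivAt.mul_const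
              (∏ k ∈ T.erase j, (if k ∈ L then deriv (ψ k) (x k) else ψ k (x k)))).const_mul (c T)
          have heq : D T = c T * (deriv (ψ j) (x j) *
              ∏ k ∈ T.erase j, (if k ∈ L then deriv (ψ k) (x k) else ψ k (x k))) := by
            have hall : ∀ k ∈ j :: L, k ∈ T := by
              intro k hk
              rcases List.mem_cons.mp hk with h | h
              · subst h; exact hjT
              · exact hLT k h
            rw [hDif T, if_pos hall]
            rw [← Finset.mul_prod_erase T _ hjT]
            congr 2
            · simp
            · refine Finset.prod_congr rfl (fun k hk => ?_)
              have : k ≠ j := Finset.ne_of_mem_erase hk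
              simp [List.mem_cons, this]
          rw [heq]
          refine HasDerivAt.congr_of_eventuallyEq hd ?_
          filter_upwards with s
          rw [if_pos hLT, hC s]
        · have heq : D T = 0 := by
            rw [hDif T, if_neg]; intro hall; exact hjT (hall j (by simp))
          rw [heq]
          have hconst : (fun s : ℝ =>
              if ∀ k ∈ L, k ∈ T then
                c T * ∏ k ∈ T,
                  (if k ∈ L then deriv (ψ k) (Function.update x j s k)
                   else ψ k (Function.update x j s k))
              else 0)
              = fun _ => c T * ∏ k ∈ T,
                  (if k ∈ L then deriv (ψ k) (x k) else ψ k (x k)) := by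
            funext s
            rw [if_pos hLT]
            congr 1
            refine Finset.prod_congr rfl (fun k hk => ?_)
            have : k ≠ j := fun h => hjT (h ▸ hk)
            simp [Function.update_of_ne this]
          rw [hconst]
          exact hasDerivAt_const _ _
      · have heq : D T = 0 := by
          rw [hDif T, if_neg]; intro hall
          exact hLT fun k hk => hall k (List.mem_cons_of_mem _ hk)
        rw [heq]
        simp only [if_neg hLT]
        exact hasDerivAt_const _ _
    have h2 : HasDerivAt (fun s : ℝ => ∑ T : Finset (Fin m),
        (if ∀ k ∈ L, k ∈ T then
            c T * ∏ k ∈ T,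
              (if k ∈ L then deriv (ψ k) (Function.update x j s k)
               else ψ k (Function.update x j s k))
          else 0)) (∑ T : Finset (Fin m), D T) (x j) :=
      HasDerivAt.fun_sum (fun T _ => hder T)
    have h1 : (fun s : ℝ => L.foldr step
          (fun t => ∑ T : Finset (Fin m), c T * ∏ k ∈ T, ψ k (t k))
          (Function.update x j s))
        =ᶠ[nhds (x j)] (fun s => ∑ T : Finset (Fin m),
          (if ∀ k ∈ L, k ∈ T then
            c T * ∏ k ∈ T,
              (if k ∈ L then deriv (ψ k) (Function.update x j s k)
               else ψ k (Function.update x j s k))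
          else 0)) := by
      filter_upwards [(hO j).eventually_mem (hx j)] with s hs
      exact hev s hs
    rw [h1.deriv_eq, h2.deriv]

/-- expansion of a product of `1 + u j • E j` over a strictly sorted list -/
lemma expand_prod (u : Fin m → ℝ) (E : Fin m → Matrix (Fin n) (Fin n) ℝ) :
    ∀ (L : List (Fin m)), L.Pairwise (· < ·) →
      (L.map (fun j => (1 : Matrix (Fin n) (Fin n) ℝ) + u j • E j)).prod
      = ∑ T ∈ L.toFinset.powerset,
          (∏ j ∈ T, u j) • ((Finset.sort T (· ≤ ·)).map E).prod := by
  intro L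
  induction L with
  | nil => simp
  | cons j L ih =>
    intro hs
    have hjlt : ∀ k ∈ L, j < k := fun k hk => List.rel_of_pairwise_cons hs hk
    have hjnot : j ∉ L.toFinset := by
      simp only [List.mem_toFinset]
      intro h; exact lt_irrefl j (hjlt j h)
    have hsl : L.Pairwise (· < ·) := hs.of_cons
    simp only [List.map_cons, List.prod_cons, List.toFinset_cons]
    rw [ih hsl, Finset.powerset_insert]
    rw [Finset.sum_union]
    · rw [add_mul, one_mul, Matrix.smul_mul]
      congr 1
      rw [Finset.sum_image (by
        intro T₁ h₁ T₂ h₂ hins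
        have h₁' : j ∉ T₁ := fun h => hjnot (Finset.mem_powerset.mp h₁ h)
        have h₂' : j ∉ T₂ := fun h => hjnot (Finset.mem_powerset.mp h₂ h)
        rw [← Finset.erase_insert h₁', ← Finset.erase_insert h₂', hins])]
      rw [Matrix.mul_sum, Finset.smul_sum]
      refine Finset.sum_congr rfl (fun T hT => ?_)
      have hjT : j ∉ T := fun h => hjnot (Finset.mem_powerset.mp hT h)
      have hle : ∀ b ∈ T, j ≤ b :=
        fun b hb => le_of_lt (hjlt b (List.mem_toFinset.mp (Finset.mem_powerset.mp hT hb)))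
      rw [Finset.sort_insert (· ≤ ·) hle hjT, List.map_cons, List.prod_cons,
        Finset.prod_insert hjT, Matrix.mul_smul, smul_smul]
    · rw [Finset.disjoint_left]
      intro T hT hT'
      have h1 : j ∉ T := fun h => hjnot (Finset.mem_powerset.mp hT h)
      rcases Finset.mem_image.mp hT' with ⟨T', _, rfl⟩
      exact h1 (Finset.mem_insert_self _ _)

/-- reversed product times product of inverses -/
lemma rev_prod_mul {R : Type*} [Monoid R] (f g : Fin m → R) :
    ∀ (L : List (Fin m)), (∀ j ∈ L, f j * g j = 1) →
      ((L.reverse.map f).prod) * ((L.map g).prod) = 1 := by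
  intro L
  induction L with
  | nil => simp
  | cons a L ih =>
    intro h
    simp only [List.reverse_cons, List.map_append, List.prod_append, List.map_cons,
      List.prod_cons, List.map_nil, List.prod_nil, mul_one]
    have : (L.reverse.map f).prod * f a * (g a * (L.map g).prod)
        = (L.reverse.map f).prod * ((f a * g a) * (L.map g).prod) := by
      rw [mul_assoc, ← mul_assoc (f a)]
    rw [this, h a (List.mem_cons_self), one_mul,
      ih (fun j hj => h j (List.mem_cons_of_mem _ hj))]

/-- the inverse factor identity -/
lemma factor_inv (a b : Fin n) (s : ℝ) (hs : (1 : ℝ) + s ≠ 0) :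
    ((1 : Matrix (Fin n) (Fin n) ℝ) + s • Matrix.single a b 1)
      * (1 + (if a = b then -(s / (1 + s)) else -s) • Matrix.single a b 1) = 1 := by
  set E := Matrix.single a b (1 : ℝ)
  set φ := if a = b then -(s / (1 + s)) else -s with hφ
  have key : (1 + s • E) * (1 + φ • E) = 1 + (s + φ) • E + (s * φ) • (E * E) := by
    simp only [mul_add, add_mul, one_mul, mul_one, Matrix.smul_mul, Matrix.mul_smul,
      smul_smul, add_smul]
    rw [mul_comm φ s]
    abel
  rw [key]
  by_cases hab : a = b
  · subst hab
    have hEE : E * E = E := by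
      show Matrix.single a a (1:ℝ) * Matrix.single a a 1 = _
      rw [Matrix.single_mul_single_same, one_mul]
    rw [hEE, hφ, if_pos rfl, add_assoc, ← add_smul]
    have : s + -(s / (1 + s)) + s * -(s / (1 + s)) = 0 := by
      field_simp
      ring
    rw [this, zero_smul, add_zero]
  · have hEE : E * E = 0 := by
      show Matrix.single a b (1:ℝ) * Matrix.single a b 1 = 0
      exact Matrix.single_mul_single_of_ne (h := Ne.symm hab) (d := 1) ..
    rw [hEE, hφ, if_neg hab, smul_zero, add_zero, add_neg_cancel, zero_smul, add_zero]

/-- product of std basis matrices is zero or a std basis matrix -/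
lemma prodE_cases (E : Fin m → Matrix (Fin n) (Fin n) ℝ)
    (hE : ∀ j, ∃ a b, E j = Matrix.single a b (1:ℝ)) :
    ∀ (L : List (Fin m)), L ≠ [] →
      ((L.map E).prod = 0 ∨ ∃ a b, (L.map E).prod = Matrix.single a b 1) := by
  intro L
  induction L with
  | nil => intro h; exact absurd rfl h
  | cons j L ih =>
    intro _
    rcases eq_or_ne L [] with rfl | hL
    · right
      obtain ⟨a, b, hab⟩ := hE j
      exact ⟨a, b, by simp [hab]⟩
    · rcases ih hL with h | ⟨a, b, h⟩
      · left; rw [List.map_cons, List.prod_cons, h, mul_zero]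
      · obtain ⟨a', b', hab'⟩ := hE j
        simp only [List.map_cons, List.prod_cons, h, hab']
        by_cases hqa : b' = a
        · right
          refine ⟨a', b, ?_⟩
          rw [← hqa, Matrix.single_mul_single_same, one_mul]
        · left
          exact Matrix.single_mul_single_of_ne (h := hqa) (d := 1) ..

lemma stdBasis_entry (a b v w : Fin n) :
    Matrix.single a b (1:ℝ) v w
      = if Matrix.single a b (1:ℝ) = Matrix.single v w 1 then 1 else 0 := by
  by_cases h : Matrix.single a b (1:ℝ) = Matrix.single v w 1
  · rw [if_pos h, h]
    simp [Matrix.single]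
  · rw [if_neg h, Matrix.single, Matrix.of_apply, if_neg]
    rintro ⟨h1, h2⟩
    exact h (by rw [h1, h2])

end EDF

/-- **Derivatives of the entries of `A(t)⁻¹` at `t = 0`.**  For every `S ⊆ {1,…,m}`
and all `v, w`:  `∂_S a_{v,w}(0) = (−1)^{|S|}` if `S` generates a path from `v`
to `w`, and `∂_S a_{v,w}(0) = 0` otherwise. -/
theorem entry_derivative_formula (n m : ℕ) (hn : 1 ≤ n) [NeZero m] (i : Fin m → Fin n)
    (S : Finset (Fin m)) (v w : Fin n) :
    mpd S (fun t => (Amat n m i t)⁻¹ v w) 0 =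
      if genPath n m i S v w then (-1 : ℝ) ^ S.card else 0 := by
  classical
  set E : Fin m → Matrix (Fin n) (Fin n) ℝ :=
    fun j => Matrix.single (i j) (i (j + 1)) 1 with hE
  set φ : Fin m → ℝ → ℝ := fun j s => if i j = i (j + 1) then -(s / (1 + s)) else -s with hφ
  set c : Finset (Fin m) → ℝ := fun T => ((Finset.sort T (· ≤ ·)).map E).prod v w with hc
  set O : Fin m → Set ℝ := fun _ => {s : ℝ | 1 + s ≠ 0} with hOdef
  have hOopen : ∀ j, IsOpen (O j) := by
    intro j
    have hcont : Continuous fun s : ℝ => 1 + s := continuous_const.add continuous_id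
    exact isOpen_ne.preimage hcont
  have hψ : ∀ j, ∀ s ∈ O j, DifferentiableAt ℝ (φ j) s := by
    intro j s hs
    by_cases h : i j = i (j + 1)
    · have h1 : φ j = fun s : ℝ => -(s / (1 + s)) := by funext u; simp [hφ, h]
      rw [h1]
      exact (differentiableAt_fun_id.div ((differentiableAt_const (1:ℝ)).add
        differentiableAt_fun_id) hs).neg
    · have h1 : φ j = fun s : ℝ => -s := by funext u; simp [hφ, h]
      rw [h1]
      exact differentiableAt_fun_id.neg
  have hφ0 : ∀ j, φ j 0 = 0 := by
    intro j; by_cases h : i j = i (j + 1) <;> simp [hφ, h]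
  have hdφ : ∀ j, deriv (φ j) 0 = -1 := by
    intro j
    by_cases h : i j = i (j + 1)
    · have h1 : φ j = fun s : ℝ => -(s / (1 + s)) := by funext u; simp [hφ, h]
      rw [h1]
      have hd : HasDerivAt (fun s : ℝ => -(s / (1 + s)))
          (-((1 * (1 + 0) - 0 * (0 + 1)) / (1 + 0) ^ 2)) 0 :=
        ((hasDerivAt_id' (0:ℝ)).div ((hasDerivAt_const (0:ℝ) (1:ℝ)).add (hasDerivAt_id' 0))
          (by norm_num)).neg
      rw [hd.deriv]
      norm_num
    · have h1 : φ j = fun s : ℝ => -s := by funext u; simp [hφ, h]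
      rw [h1]
      have hd : HasDerivAt (fun s : ℝ => -s) (-1) 0 := (hasDerivAt_id' (0:ℝ)).neg
      rw [hd.deriv]
  set U : Set (Fin m → ℝ) := ⋂ j, {t : Fin m → ℝ | 1 + t j ≠ 0} with hUdef
  have hUopen : IsOpen U := by
    refine isOpen_iInter_of_finite (fun j => ?_)
    have hcont : Continuous fun t : Fin m → ℝ => 1 + t j :=
      continuous_const.add (continuous_apply j)
    exact isOpen_ne.preimage hcont
  have h0U : (0 : Fin m → ℝ) ∈ U := by
    rw [hUdef, Set.mem_iInter]
    intro j
    simp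
  have hinv : ∀ t ∈ U, (Amat n m i t)⁻¹ v w
      = ∑ T : Finset (Fin m), c T * ∏ j ∈ T, φ j (t j) := by
    intro t ht
    have ht' : ∀ j, (1:ℝ) + t j ≠ 0 := fun j => Set.mem_iInter.mp ht j
    have hBinv : (Amat n m i t)⁻¹
        = ((List.finRange m).map
            (fun j => (1 : Matrix (Fin n) (Fin n) ℝ) + (φ j (t j)) • E j)).prod := by
      apply Matrix.inv_eq_right_inv
      exact EDF.rev_prod_mul
        (fun j => (1 : Matrix (Fin n) (Fin n) ℝ) + t j • E j)
        (fun j => (1 : Matrix (Fin n) (Fin n) ℝ) + (φ j (t j)) • E j)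
        (List.finRange m)
        (fun j _ => EDF.factor_inv (i j) (i (j + 1)) (t j) (ht' j))
    rw [hBinv]
    rw [EDF.expand_prod (fun j => φ j (t j)) E (List.finRange m) (List.pairwise_lt_finRange m)]
    rw [List.toFinset_finRange, Finset.powerset_univ]
    rw [Matrix.sum_apply]
    refine Finset.sum_congr rfl (fun T _ => ?_)
    rw [Matrix.smul_apply, smul_eq_mul, mul_comm]
  have hloc := EDF.foldr_congr (Finset.sort S (· ≤ ·)) hUopen hinv 0 h0U
  have hcomp := EDF.foldr_sum_prod φ O hOopen hψ c (Finset.sort S (· ≤ ·))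
    (Finset.sort_nodup _ _) 0 (fun j => by simp [hOdef])
  have hmain : mpd S (fun t => (Amat n m i t)⁻¹ v w) 0
      = ∑ T : Finset (Fin m),
          if ∀ j ∈ Finset.sort S (· ≤ ·), j ∈ T then
            c T * ∏ j ∈ T,
              (if j ∈ Finset.sort S (· ≤ ·) then deriv (φ j) ((0 : Fin m → ℝ) j)
               else φ j ((0 : Fin m → ℝ) j))
          else 0 := by
    calc mpd S (fun t => (Amat n m i t)⁻¹ v w) 0
        = (Finset.sort S (· ≤ ·)).foldr EDF.step (fun t => (Amat n m i t)⁻¹ v w) 0 := rfl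
      _ = (Finset.sort S (· ≤ ·)).foldr EDF.step
            (fun t => ∑ T : Finset (Fin m), c T * ∏ j ∈ T, φ j (t j)) 0 := hloc
      _ = _ := hcomp
  have hsum : (∑ T : Finset (Fin m),
      if ∀ j ∈ Finset.sort S (· ≤ ·), j ∈ T then
        c T * ∏ j ∈ T,
          (if j ∈ Finset.sort S (· ≤ ·) then deriv (φ j) ((0 : Fin m → ℝ) j)
           else φ j ((0 : Fin m → ℝ) j))
      else 0) = c S * (-1 : ℝ) ^ S.card := by
    rw [Finset.sum_eq_single S]
    · rw [if_pos (fun j hj => (Finset.mem_sort (α := Fin m) (r := (· ≤ ·))).mp hj)]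
      have hprod : ∀ j ∈ S,
          (if j ∈ Finset.sort S (· ≤ ·) then deriv (φ j) ((0 : Fin m → ℝ) j)
           else φ j ((0 : Fin m → ℝ) j)) = -1 := by
        intro j hj
        rw [if_pos ((Finset.mem_sort (α := Fin m) (r := (· ≤ ·))).mpr hj)]
        simpa using hdφ j
      rw [Finset.prod_congr rfl hprod, Finset.prod_const]
    · intro T _ hTS
      by_cases hST : ∀ j ∈ Finset.sort S (· ≤ ·), j ∈ T
      · rw [if_pos hST]
        have hsub : S ⊆ T := fun j hj => hST j ((Finset.mem_sort (α := Fin m) (r := (· ≤ ·))).mpr hj)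
        obtain ⟨j, hjT, hjS⟩ :=
          Finset.exists_of_ssubset (Finset.ssubset_iff_subset_ne.mpr ⟨hsub, Ne.symm hTS⟩)
        refine mul_eq_zero_of_right _ (Finset.prod_eq_zero hjT ?_)
        rw [if_neg (fun h => hjS ((Finset.mem_sort (α := Fin m) (r := (· ≤ ·))).mp h))]
        simpa using hφ0 j
      · rw [if_neg hST]
    · intro h; exact absurd (Finset.mem_univ S) h
  rw [hmain, hsum]
  have hcS : c S = if genPath n m i S v w then 1 else 0 := by
    by_cases hS : S = ∅
    · subst hS
      have hgp : genPath n m i (∅ : Finset (Fin m)) v w ↔ v = w := by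
        unfold genPath
        rw [if_pos rfl]
      rw [show c (∅ : Finset (Fin m))
        = ((Finset.sort (∅ : Finset (Fin m)) (· ≤ ·)).map E).prod v w from rfl]
      simp only [Finset.sort_empty, List.map_nil, List.prod_nil]
      rw [Matrix.one_apply]
      by_cases hvw : v = w
      · rw [if_pos hvw, if_pos (hgp.mpr hvw)]
      · rw [if_neg hvw, if_neg (fun h => hvw (hgp.mp h))]
    · have hsortne : Finset.sort S (· ≤ ·) ≠ [] := by
        intro h
        apply hS
        have hlen := Finset.length_sort (α := Fin m) (s := S) (· ≤ ·)
        rw [h] at hlen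
        exact Finset.card_eq_zero.mp hlen.symm
      have hEstd : ∀ j, ∃ a b, E j = Matrix.single a b (1:ℝ) :=
        fun j => ⟨i j, i (j + 1), rfl⟩
      have hgp : genPath n m i S v w ↔
          ((Finset.sort S (· ≤ ·)).map E).prod = Matrix.single v w 1 := by
        unfold genPath
        rw [if_neg hS]
      rcases EDF.prodE_cases E hEstd (Finset.sort S (· ≤ ·)) hsortne with h0 | ⟨a, b, hab⟩
      · rw [show c S = ((Finset.sort S (· ≤ ·)).map E).prod v w from rfl, h0]
        have hng : ¬ genPath n m i S v w := by
          rw [hgp, h0]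
          intro hcontr
          have := congrArg (fun M => M v w) hcontr
          simp [Matrix.single] at this
        rw [if_neg hng]
        simp
      · rw [show c S = ((Finset.sort S (· ≤ ·)).map E).prod v w from rfl, hab,
          EDF.stdBasis_entry]
        have hgp2 : genPath n m i S v w ↔
            Matrix.single a b (1:ℝ) = Matrix.single v w 1 := by
          rw [hgp, hab]
        by_cases hm : Matrix.single a b (1:ℝ) = Matrix.single v w 1
        · rw [if_pos hm, if_pos (hgp2.mpr hm)]
        · rw [if_neg hm, if_neg (fun h => hm (hgp2.mp h))]
  rw [hcS]
  by_cases hg : genPath n m i S v w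
  · rw [if_pos hg, if_pos hg, one_mul]
  · rw [if_neg hg, if_neg hg, zero_mul]

end
end

section
/- With the setup below, for every subset S ⊆ {1,…,m} and all 1 ≤ v, w ≤ n: ∂_S ⟨a_v(·), a_w(·)⟩(0) = (−1)^{|S|} · N, where N is the number of ordered pairs (S₁, S₂) of disjoint subsets of {1,…,m} with S₁ ∪ S₂ = S such that for some 1 ≤ u ≤ n, S₁ generates a path from u to v and S₂ generates a path from u to w. -/
open scoped Classical

noncomputable section

/-- The standard inner product on `ℝⁿ`. -/
def dotR {n : ℕ} (x y : Fin n → ℝ) : ℝ := ∑ u, x u * y u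

namespace IPDF

open Matrix Function


/-- telescoping inverse for list products -/
lemma prod_rev_mul {M : Type*} [Monoid M] {ι : Type*} (l : List ι) (F G : ι → M)
    (h : ∀ j ∈ l, F j * G j = 1) :
    (l.reverse.map F).prod * (l.map G).prod = 1 := by
  induction l with
  | nil => simp
  | cons a l ih =>
      simp only [List.reverse_cons, List.map_append, List.prod_append, List.map_cons,
        List.prod_cons, List.map_nil, List.prod_nil, mul_one]
      have h1 : F a * G a = 1 := h a (by simp)
      have h2 : (l.reverse.map F).prod * (l.map G).prod = 1 :=
        ih (fun j hj => h j (by simp [hj]))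
      calc (l.reverse.map F).prod * F a * (G a * (l.map G).prod)
          = (l.reverse.map F).prod * (F a * G a) * (l.map G).prod := by
            rw [mul_assoc, mul_assoc, mul_assoc]
        _ = 1 := by rw [h1, mul_one, h2]
  
/-- noncommutative expansion of a product of (1 + A j) over a sorted list -/
lemma prod_one_add {R : Type*} [Ring R] {ι : Type*} [LinearOrder ι] [DecidableEq ι]
    (l : List ι) (hl : l.Pairwise (· < ·)) (A : ι → R) :
    (l.map (fun j => 1 + A j)).prod
      = ∑ T ∈ l.toFinset.powerset, ((T.sort (· ≤ ·)).map A).prod := by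
  induction l with
  | nil => simp
  | cons a l ih =>
      have hal : ∀ b ∈ l, a < b := fun b hb => (List.pairwise_cons.mp hl).1 b hb
      have ha : a ∉ l.toFinset := by
        simp only [List.mem_toFinset]
        intro hmem
        exact lt_irrefl a (hal a hmem)
      rw [List.map_cons, List.prod_cons, ih (List.pairwise_cons.mp hl).2,
        List.toFinset_cons, Finset.sum_powerset_insert ha, add_mul, one_mul, Finset.mul_sum]
      congr 1
      apply Finset.sum_congr rfl
      intro T hT
      have hsub : T ⊆ l.toFinset := Finset.mem_powerset.mp hT
      have haT : a ∉ T := fun h => ha (hsub h)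
      have hsort : Finset.sort (insert a T) (· ≤ ·) = a :: Finset.sort T (· ≤ ·) :=
        Finset.sort_insert _ (fun b hb => le_of_lt (hal b (List.mem_toFinset.mp (hsub hb)))) haT
      rw [hsort, List.map_cons, List.prod_cons]

lemma prod_map_smul {ι : Type*} {N : Type*} [Ring N] [Algebra ℝ N]
    (l : List ι) (c : ι → ℝ) (M : ι → N) :
    (l.map (fun j => c j • M j)).prod = (l.map c).prod • (l.map M).prod := by
  induction l with
  | nil => simp
  | cons a l ih =>
      simp only [List.map_cons, List.prod_cons, ih, smul_mul_assoc, mul_smul_comm, smul_smul, mul_comm]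

lemma prod_sort {ι : Type*} [LinearOrder ι] (T : Finset ι) (c : ι → ℝ) :
    ((T.sort (· ≤ ·)).map c).prod = ∏ j ∈ T, c j := by
  rw [← Finset.prod_map_toList]
  exact List.Perm.prod_eq ((Finset.sort_perm_toList _ _).map c)


variable {n m : ℕ} [NeZero m] (i : Fin m → Fin n)

/-- ordered product of elementary matrices over a finset -/
def pathMat (T : Finset (Fin m)) : Matrix (Fin n) (Fin n) ℝ :=
  ((T.sort (· ≤ ·)).map (fun j => Matrix.single (i j) (i (j + 1)) (1 : ℝ))).prod

lemma prod_std (l : List (Fin m)) (hne : l ≠ []) :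
    (l.map (fun j => Matrix.single (i j) (i (j + 1)) (1 : ℝ))).prod = 0 ∨
    ∃ a b : Fin n,
      (l.map (fun j => Matrix.single (i j) (i (j + 1)) (1 : ℝ))).prod
        = Matrix.single a b 1 := by
  induction l with
  | nil => exact absurd rfl hne
  | cons j l ih =>
      rcases eq_or_ne l [] with rfl | hl
      · right; exact ⟨i j, i (j + 1), by simp⟩
      · rcases ih hl with h | ⟨a, b, h⟩
        · left; rw [List.map_cons, List.prod_cons, h, mul_zero]
        · rcases eq_or_ne (i (j + 1)) a with he | he
          · right
            refine ⟨i j, b, ?_⟩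
            rw [List.map_cons, List.prod_cons, h, ← he,
              Matrix.single_mul_single_same _ _ _ _, one_mul]
          · left
            rw [List.map_cons, List.prod_cons, h,
              Matrix.single_mul_single_of_ne _ _ _ _ he]

lemma stdBasis_entry (a b u v : Fin n) :
    Matrix.single a b (1 : ℝ) u v = if a = u ∧ b = v then 1 else 0 := by
  by_cases h : a = u ∧ b = v
  · obtain ⟨rfl, rfl⟩ := h; simp
  · rw [Matrix.single_apply_of_ne _ _ _ _ _ h, if_neg h]

lemma pathMat_entry (T : Finset (Fin m)) (u v : Fin n) :
    pathMat i T u v = if genPath n m i T u v then 1 else 0 := by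
  by_cases hT : T = ∅
  · subst hT
    rw [pathMat, Finset.sort_empty, List.map_nil, List.prod_nil]
    unfold genPath
    rw [if_pos rfl]
    by_cases huv : u = v
    · subst huv; simp
    · rw [Matrix.one_apply_ne huv, if_neg huv]
  · unfold genPath
    rw [if_neg hT]
    have hne : T.sort (· ≤ ·) ≠ [] := by
      intro h
      apply hT
      have := Finset.sort_perm_toList T (· ≤ ·)
      rw [h] at this
      have := this.symm.eq_nil
      rwa [Finset.toList_eq_nil] at this
    rcases prod_std i _ hne with h | ⟨a, b, h⟩
    · rw [pathMat, h]
      have : ¬ ((0 : Matrix (Fin n) (Fin n) ℝ) = Matrix.single u v 1) := by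
        intro hc
        have := congrFun (congrFun hc u) v
        simp at this
      rw [if_neg (h ▸ this), Matrix.zero_apply]
  
    · rw [pathMat, h, stdBasis_entry]
      by_cases hab : a = u ∧ b = v
      · obtain ⟨rfl, rfl⟩ := hab
        rw [if_pos ⟨rfl, rfl⟩, if_pos (h ▸ rfl)]
      · rw [if_neg hab, if_neg]
        intro hc
        have := congrFun (congrFun hc a) b
        rw [Matrix.single_apply_same, stdBasis_entry] at this
        by_cases h2 : u = a ∧ v = b
        · exact hab ⟨h2.1.symm, h2.2.symm⟩
        · rw [if_neg h2] at this; norm_num at this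

lemma genPath_unique (T : Finset (Fin m)) (u u' v : Fin n)
    (h : genPath n m i T u v) (h' : genPath n m i T u' v) : u = u' := by
  by_cases hT : T = ∅
  · unfold genPath at h h'
    rw [if_pos hT] at h h'
    exact h.trans h'.symm
  · unfold genPath at h h'
    rw [if_neg hT] at h h'
    have hc := h.symm.trans h'
    by_contra hne
    have := congrFun (congrFun hc u) v
    rw [Matrix.single_apply_same,
      Matrix.single_apply_of_row_ne (Ne.symm hne)] at this
    norm_num at this


/-- coefficient function for the inverse factor -/
def gfun (j : Fin m) (s : ℝ) : ℝ := if i j = i (j + 1) then s / (1 + s) else s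

lemma gfun_zero (j : Fin m) : gfun i j 0 = 0 := by
  unfold gfun; split <;> simp

lemma gfun_diff (j : Fin m) {s : ℝ} (hs : s ≠ -1) :
    DifferentiableAt ℝ (gfun i j) s := by
  have h1 : (1 : ℝ) + s ≠ 0 := by intro h; apply hs; linarith
  unfold gfun
  by_cases hij : i j = i (j + 1)
  · simp only [if_pos hij]
    exact differentiableAt_id.div ((differentiableAt_const 1).add differentiableAt_id) h1
  · simp only [if_neg hij]
    exact differentiableAt_id

lemma gfun_hasDerivAt_zero (j : Fin m) : HasDerivAt (gfun i j) 1 0 := by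
  unfold gfun
  by_cases hij : i j = i (j + 1)
  · simp only [if_pos hij]
    have h := (hasDerivAt_id' (x := (0 : ℝ))).fun_div
      ((hasDerivAt_const (0 : ℝ) 1).fun_add (hasDerivAt_id' (x := 0))) (by norm_num)
    exact h.congr_deriv (by norm_num)
  · simp only [if_neg hij]
    exact hasDerivAt_id 0

lemma factor_inv (j : Fin m) (s : ℝ) (hs : s ≠ -1) :
    ((1 : Matrix (Fin n) (Fin n) ℝ) + s • Matrix.single (i j) (i (j + 1)) 1) *
      (1 + (-(gfun i j s)) • Matrix.single (i j) (i (j + 1)) 1) = 1 := by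
  have h1 : (1 : ℝ) + s ≠ 0 := by intro h; apply hs; linarith
  set E := Matrix.single (i j) (i (j + 1)) (1 : ℝ) with hE
  have expand : ∀ a b : ℝ, ((1 : Matrix (Fin n) (Fin n) ℝ) + a • E) * (1 + b • E)
      = 1 + (a + b) • E + (a * b) • (E * E) := by
    intro a b
    have hs : (a • E) * (b • E) = (a * b) • (E * E) := by
      rw [smul_mul_assoc, mul_smul_comm, smul_smul]
    rw [mul_add, mul_one, add_mul, one_mul, smul_mul_assoc]
    rw [mul_smul_comm, smul_smul, add_smul]
    abel
  by_cases hij : i j = i (j + 1)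
  · have hEE : E * E = E := by
      rw [hE]
      nth_rewrite 2 [hij]
      rw [Matrix.single_mul_single_same _ _ _ _, one_mul, ← hij]
    rw [expand, hEE]
    have hg : gfun i j s = s / (1 + s) := by rw [gfun, if_pos hij]
    have : s + -gfun i j s + s * -gfun i j s = 0 := by
      rw [hg]; field_simp; ring
    rw [add_assoc, ← add_smul, this, zero_smul, add_zero]
  · have hEE : E * E = 0 := by
      rw [hE]
      exact Matrix.single_mul_single_of_ne _ _ _ _ (fun h => hij h.symm) _
    have hg : gfun i j s = s := by rw [gfun, if_neg hij]
    rw [expand, hEE, smul_zero, add_zero, hg]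
    simp

/-- the explicit inverse -/
def Bmat (t : Fin m → ℝ) : Matrix (Fin n) (Fin n) ℝ :=
  ((List.finRange m).map
    (fun j => (1 : Matrix (Fin n) (Fin n) ℝ) +
      (-(gfun i j (t j))) • Matrix.single (i j) (i (j + 1)) 1)).prod

lemma Amat_inv (t : Fin m → ℝ) (ht : ∀ j, t j ≠ -1) :
    (Amat n m i t)⁻¹ = Bmat i t :=
  Matrix.inv_eq_right_inv (prod_rev_mul (List.finRange m) _ _
    (fun j _ => factor_inv i j (t j) (ht j)))

lemma Bmat_eq (t : Fin m → ℝ) :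
    Bmat i t = ∑ T : Finset (Fin m),
      (∏ j ∈ T, (-(gfun i j (t j)))) • pathMat i T := by
  rw [Bmat, prod_one_add _ (List.pairwise_lt_finRange m)]
  have huniv : (List.finRange m).toFinset = (Finset.univ : Finset (Fin m)) := by
    ext x; simp [List.mem_finRange]
  rw [huniv, Finset.powerset_univ]
  apply Finset.sum_congr rfl
  intro T _
  have : ∀ j : Fin m, (-(gfun i j (t j))) • Matrix.single (i j) (i (j + 1)) (1 : ℝ)
      = (fun j => (-(gfun i j (t j))) • Matrix.single (i j) (i (j + 1)) (1:ℝ)) j :=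
    fun _ => rfl
  rw [show ((T.sort (· ≤ ·)).map
      (fun j => (-(gfun i j (t j))) • Matrix.single (i j) (i (j + 1)) (1:ℝ))).prod
      = ((T.sort (· ≤ ·)).map (fun j => -(gfun i j (t j)))).prod •
        ((T.sort (· ≤ ·)).map (fun j => Matrix.single (i j) (i (j + 1)) (1:ℝ))).prod
    from prod_map_smul _ _ _, prod_sort]
  rfl

lemma Bmat_entry (t : Fin m → ℝ) (u v : Fin n) :
    Bmat i t u v = ∑ T : Finset (Fin m),
      (∏ j ∈ T, (-(gfun i j (t j)))) * pathMat i T u v := by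
  rw [Bmat_eq]
  simp [Matrix.sum_apply]


/-- the single differentiation step used by `mpd` -/
def dstep {m : ℕ} (j : Fin m) (h : (Fin m → ℝ) → ℝ) (x : Fin m → ℝ) : ℝ :=
  deriv (fun s : ℝ => h (Function.update x j s)) (x j)

lemma mpd_eq_foldr {m : ℕ} (S : Finset (Fin m)) (f : (Fin m → ℝ) → ℝ) :
    mpd S f = (Finset.sort S (· ≤ ·)).foldr dstep f := rfl

lemma eventually_update_mem {m : ℕ} {U : Set (Fin m → ℝ)} (hU : IsOpen U)
    {x : Fin m → ℝ} (hx : x ∈ U) (j : Fin m) :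
    ∀ᶠ s in nhds (x j), Function.update x j s ∈ U := by
  have hc : Continuous (fun s : ℝ => Function.update x j s) :=
    continuous_const.update j continuous_id
  have hx' : Function.update x j (x j) = x := Function.update_eq_self j x
  have : (fun s : ℝ => Function.update x j s) ⁻¹' U ∈ nhds (x j) :=
    hc.continuousAt.preimage_mem_nhds (by rw [hx']; exact hU.mem_nhds hx)
  exact this

lemma foldr_congr {m : ℕ} (l : List (Fin m)) {U : Set (Fin m → ℝ)} (hU : IsOpen U)
    (f g : (Fin m → ℝ) → ℝ) (hfg : ∀ y ∈ U, f y = g y) :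
    ∀ x ∈ U, l.foldr dstep f x = l.foldr dstep g x := by
  induction l with
  | nil => exact hfg
  | cons j l ih =>
      intro x hx
      show deriv (fun s : ℝ => l.foldr dstep f (Function.update x j s)) (x j)
        = deriv (fun s : ℝ => l.foldr dstep g (Function.update x j s)) (x j)
      apply Filter.EventuallyEq.deriv_eq
      filter_upwards [eventually_update_mem hU hx j] with s hs
      exact ih _ hs

lemma foldr_sum_prod {m : ℕ} {ι : Type*} (P : Finset ι) (c : ι → ℝ)
    (ψ : ι → Fin m → ℝ → ℝ) {U : Set (Fin m → ℝ)} (hU : IsOpen U)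
    (hdiff : ∀ p ∈ P, ∀ j : Fin m, ∀ y ∈ U, DifferentiableAt ℝ (ψ p j) (y j)) :
    ∀ (l : List (Fin m)), l.Nodup → ∀ x ∈ U,
      l.foldr dstep (fun t => ∑ p ∈ P, c p * ∏ j, ψ p j (t j)) x
        = ∑ p ∈ P, c p * ∏ j, (if j ∈ l then deriv (ψ p j) (x j) else ψ p j (x j)) := by
  intro l
  induction l with
  | nil =>
      intro _ x _
      simp
  | cons j l ih =>
      intro hnd x hx
      have hjl : j ∉ l := (List.nodup_cons.mp hnd).1
      have hnd' : l.Nodup := (List.nodup_cons.mp hnd).2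
      show deriv (fun s : ℝ =>
          l.foldr dstep (fun t => ∑ p ∈ P, c p * ∏ j, ψ p j (t j))
            (Function.update x j s)) (x j) = _
      set C : ι → ℝ := fun p => ∏ j' ∈ Finset.univ.erase j,
          (if j' ∈ l then deriv (ψ p j') (x j') else ψ p j' (x j')) with hC
      have heq : (fun s : ℝ =>
          l.foldr dstep (fun t => ∑ p ∈ P, c p * ∏ j, ψ p j (t j))
            (Function.update x j s))
          =ᶠ[nhds (x j)] (fun s : ℝ => ∑ p ∈ P, c p * (ψ p j s * C p)) := by
        filter_upwards [eventually_update_mem hU hx j] with s hs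
        rw [ih hnd' _ hs]
        apply Finset.sum_congr rfl
        intro p _
        congr 1
        rw [← Finset.mul_prod_erase Finset.univ _ (Finset.mem_univ j)]
        congr 1
        · rw [if_neg hjl, Function.update_self]
        · apply Finset.prod_congr rfl
          intro j' hj'
          rw [Function.update_of_ne (Finset.ne_of_mem_erase hj')]
      rw [heq.deriv_eq]
      have hder : HasDerivAt (fun s : ℝ => ∑ p ∈ P, c p * (ψ p j s * C p))
          (∑ p ∈ P, c p * (deriv (ψ p j) (x j) * C p)) (x j) := by
        apply HasDerivAt.fun_sum
        intro p hp
        exact (((hdiff p hp j x hx).hasDerivAt).mul_const (C p)).const_mul (c p)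
      rw [hder.deriv]
      apply Finset.sum_congr rfl
      intro p _
      congr 1
      rw [← Finset.mul_prod_erase Finset.univ
        (fun j' => if j' ∈ j :: l then deriv (ψ p j') (x j') else ψ p j' (x j'))
        (Finset.mem_univ j)]
      congr 1
      · rw [if_pos (List.mem_cons_self)]
      · apply Finset.prod_congr rfl
        intro j' hj'
        have hne : j' ≠ j := Finset.ne_of_mem_erase hj'
        by_cases h : j' ∈ l
        · rw [if_pos h, if_pos (List.mem_cons_of_mem j h)]
        · rw [if_neg h, if_neg (by simp [hne, h])]

end IPDF

/-- **Derivatives of inner products of columns of `A(t)⁻¹` at `t = 0`.**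
For every `S ⊆ {1,…,m}` and all `v, w`:
`∂_S ⟨a_v(·), a_w(·)⟩ (0) = (−1)^{|S|} · N`, where `N` is the number of ordered pairs
`(S₁, S₂)` of disjoint subsets of `{1,…,m}` with `S₁ ∪ S₂ = S` such that, for some
`u`, `S₁` generates a path from `u` to `v` and `S₂` generates a path from `u` to `w`. -/
theorem inner_product_derivative_formula (n m : ℕ) (hn : 1 ≤ n) [NeZero m]
    (i : Fin m → Fin n) (S : Finset (Fin m)) (v w : Fin n) :
    mpd S (fun t => dotR (fun u => (Amat n m i t)⁻¹ u v) (fun u => (Amat n m i t)⁻¹ u w)) 0 =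
      (-1 : ℝ) ^ S.card *
        (((Finset.univ : Finset (Finset (Fin m) × Finset (Fin m))).filter
          (fun p => Disjoint p.1 p.2 ∧ p.1 ∪ p.2 = S ∧
            ∃ u : Fin n, genPath n m i p.1 u v ∧ genPath n m i p.2 u w)).card : ℝ) := by
  classical
  set U : Set (Fin m → ℝ) := {t | ∀ j, t j ≠ -1} with hUdef
  have hU : IsOpen U := by
    have hrw : U = ⋂ j : Fin m, (fun t : Fin m → ℝ => t j) ⁻¹' ({(-1 : ℝ)}ᶜ) := by
      ext t; simp [hUdef, Set.mem_iInter]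
    rw [hrw]
    exact isOpen_iInter_of_finite fun j => isOpen_compl_singleton.preimage (continuous_apply j)
  have h0U : (0 : Fin m → ℝ) ∈ U := by intro j; norm_num
  set ψ : (Finset (Fin m) × Finset (Fin m)) → Fin m → ℝ → ℝ :=
    fun p j s => (if j ∈ p.1 then -(IPDF.gfun i j s) else 1) *
                 (if j ∈ p.2 then -(IPDF.gfun i j s) else 1) with hψdef
  set c : (Finset (Fin m) × Finset (Fin m)) → ℝ :=
    fun p => ∑ u, IPDF.pathMat i p.1 u v * IPDF.pathMat i p.2 u w with hcdef
  have hdiff : ∀ p ∈ (Finset.univ : Finset (Finset (Fin m) × Finset (Fin m))),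
      ∀ j : Fin m, ∀ y ∈ U, DifferentiableAt ℝ (ψ p j) (y j) := by
    intro p _ j y hy
    have hg : DifferentiableAt ℝ (IPDF.gfun i j) (y j) := IPDF.gfun_diff i j (hy j)
    have h1 : DifferentiableAt ℝ (fun s => if j ∈ p.1 then -(IPDF.gfun i j s) else 1) (y j) := by
      by_cases h : j ∈ p.1 <;> simp only [h, if_true, if_false]
      · exact hg.neg
      · exact differentiableAt_const 1
    have h2 : DifferentiableAt ℝ (fun s => if j ∈ p.2 then -(IPDF.gfun i j s) else 1) (y j) := by
      by_cases h : j ∈ p.2 <;> simp only [h, if_true, if_false]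
      · exact hg.neg
      · exact differentiableAt_const 1
    exact h1.mul h2
  have hprodψ : ∀ (T1 T2 : Finset (Fin m)) (t : Fin m → ℝ),
      ∏ j, ψ (T1, T2) j (t j)
        = (∏ j ∈ T1, -(IPDF.gfun i j (t j))) * (∏ j ∈ T2, -(IPDF.gfun i j (t j))) := by
    intro T1 T2 t
    simp only [hψdef]
    rw [Finset.prod_mul_distrib]
    congr 1
    · rw [Finset.prod_ite_mem Finset.univ T1 (fun j => -(IPDF.gfun i j (t j))),
        Finset.univ_inter]
    · rw [Finset.prod_ite_mem Finset.univ T2 (fun j => -(IPDF.gfun i j (t j))),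
        Finset.univ_inter]
  have htarget : ∀ t ∈ U,
      dotR (fun u => (Amat n m i t)⁻¹ u v) (fun u => (Amat n m i t)⁻¹ u w)
        = ∑ p ∈ (Finset.univ : Finset (Finset (Fin m) × Finset (Fin m))),
            c p * ∏ j, ψ p j (t j) := by
    intro t ht
    have hAinv : (Amat n m i t)⁻¹ = IPDF.Bmat i t := IPDF.Amat_inv i t ht
    rw [dotR]
    simp only [hAinv, IPDF.Bmat_entry]
    rw [Fintype.sum_prod_type]
    calc ∑ u, (∑ T1 : Finset (Fin m), (∏ j ∈ T1, -(IPDF.gfun i j (t j))) * IPDF.pathMat i T1 u v)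
            * (∑ T2 : Finset (Fin m), (∏ j ∈ T2, -(IPDF.gfun i j (t j))) * IPDF.pathMat i T2 u w)
        = ∑ u, ∑ T1 : Finset (Fin m), ∑ T2 : Finset (Fin m),
            ((∏ j ∈ T1, -(IPDF.gfun i j (t j))) * IPDF.pathMat i T1 u v)
            * ((∏ j ∈ T2, -(IPDF.gfun i j (t j))) * IPDF.pathMat i T2 u w) := by
          apply Finset.sum_congr rfl
          intro u _
          rw [Finset.sum_mul_sum]
      _ = ∑ T1 : Finset (Fin m), ∑ T2 : Finset (Fin m), ∑ u,
            ((∏ j ∈ T1, -(IPDF.gfun i j (t j))) * IPDF.pathMat i T1 u v)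
            * ((∏ j ∈ T2, -(IPDF.gfun i j (t j))) * IPDF.pathMat i T2 u w) := by
          rw [Finset.sum_comm]
          apply Finset.sum_congr rfl
          intro T1 _
          rw [Finset.sum_comm]
      _ = ∑ T1 : Finset (Fin m), ∑ T2 : Finset (Fin m),
            c (T1, T2) * ∏ j, ψ (T1, T2) j (t j) := by
          apply Finset.sum_congr rfl
          intro T1 _
          apply Finset.sum_congr rfl
          intro T2 _
          rw [hprodψ, hcdef, Finset.sum_mul]
          apply Finset.sum_congr rfl
          intro u _
          ring
  have hmain : mpd S (fun t => dotR (fun u => (Amat n m i t)⁻¹ u v)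
      (fun u => (Amat n m i t)⁻¹ u w)) 0
      = ∑ p ∈ (Finset.univ : Finset (Finset (Fin m) × Finset (Fin m))),
          c p * ∏ j, (if j ∈ S then deriv (ψ p j) ((0 : Fin m → ℝ) j)
            else ψ p j ((0 : Fin m → ℝ) j)) := by
    rw [IPDF.mpd_eq_foldr]
    rw [IPDF.foldr_congr (Finset.sort S (· ≤ ·)) hU _
      (fun t => ∑ p ∈ (Finset.univ : Finset (Finset (Fin m) × Finset (Fin m))),
        c p * ∏ j, ψ p j (t j)) htarget 0 h0U]
    rw [IPDF.foldr_sum_prod Finset.univ c ψ hU hdiff (Finset.sort S (· ≤ ·))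
      (Finset.sort_nodup _ _) 0 h0U]
    apply Finset.sum_congr rfl
    intro p _
    congr 1
    apply Finset.prod_congr rfl
    intro j _
    simp only [Finset.mem_sort]
  rw [hmain]
  simp only [Pi.zero_apply]
  -- values of ψ and its derivative at 0
  have hψ0 : ∀ p : Finset (Fin m) × Finset (Fin m), ∀ j : Fin m,
      ψ p j 0 = (if j ∈ p.1 then (0:ℝ) else 1) * (if j ∈ p.2 then (0:ℝ) else 1) := by
    intro p j
    simp only [hψdef, IPDF.gfun_zero, neg_zero]
  have hdψ0 : ∀ p : Finset (Fin m) × Finset (Fin m), ∀ j : Fin m,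
      deriv (ψ p j) 0
        = (if j ∈ p.1 then (-1:ℝ) else 0) * (if j ∈ p.2 then (0:ℝ) else 1)
          + (if j ∈ p.1 then (0:ℝ) else 1) * (if j ∈ p.2 then (-1:ℝ) else 0) := by
    intro p j
    have hg := IPDF.gfun_hasDerivAt_zero i j
    have h1 : HasDerivAt (fun s => if j ∈ p.1 then -(IPDF.gfun i j s) else 1)
        (if j ∈ p.1 then (-1:ℝ) else 0) 0 := by
      by_cases h : j ∈ p.1 <;> simp only [h, if_true, if_false]
      · exact hg.neg
      · exact hasDerivAt_const 0 1
    have h2 : HasDerivAt (fun s => if j ∈ p.2 then -(IPDF.gfun i j s) else 1)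
        (if j ∈ p.2 then (-1:ℝ) else 0) 0 := by
      by_cases h : j ∈ p.2 <;> simp only [h, if_true, if_false]
      · exact hg.neg
      · exact hasDerivAt_const 0 1
    have hmul := h1.fun_mul h2
    simp only [hψdef]
    rw [hmul.deriv]
    simp only [IPDF.gfun_zero, neg_zero]
  have hcval : ∀ p : Finset (Fin m) × Finset (Fin m),
      c p = if (∃ u : Fin n, genPath n m i p.1 u v ∧ genPath n m i p.2 u w)
        then (1:ℝ) else 0 := by
    intro p
    simp only [hcdef]
    have hterm : ∀ u : Fin n, IPDF.pathMat i p.1 u v * IPDF.pathMat i p.2 u w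
        = if (genPath n m i p.1 u v ∧ genPath n m i p.2 u w) then (1:ℝ) else 0 := by
      intro u
      rw [IPDF.pathMat_entry, IPDF.pathMat_entry]
      by_cases h1 : genPath n m i p.1 u v <;> by_cases h2 : genPath n m i p.2 u w <;>
        simp [h1, h2]
    rw [Finset.sum_congr rfl (fun u _ => hterm u)]
    by_cases hex : ∃ u : Fin n, genPath n m i p.1 u v ∧ genPath n m i p.2 u w
    · obtain ⟨u0, hu0⟩ := hex
      rw [if_pos ⟨u0, hu0⟩]
      rw [Finset.sum_eq_single_of_mem u0 (Finset.mem_univ u0)]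
      · rw [if_pos hu0]
      · intro u _ hne
        rw [if_neg]
        intro h
        exact hne (IPDF.genPath_unique i p.1 u u0 v h.1 hu0.1)
    · rw [if_neg hex, Finset.sum_eq_zero]
      intro u _
      rw [if_neg (fun h => hex ⟨u, h⟩)]
  have htermval : ∀ p : Finset (Fin m) × Finset (Fin m),
      c p * ∏ j, (if j ∈ S then deriv (ψ p j) 0 else ψ p j 0)
        = if (Disjoint p.1 p.2 ∧ p.1 ∪ p.2 = S ∧
            ∃ u : Fin n, genPath n m i p.1 u v ∧ genPath n m i p.2 u w)
          then (-1:ℝ)^S.card else 0 := by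
    intro p
    by_cases hd : Disjoint p.1 p.2 ∧ p.1 ∪ p.2 = S
    · have hfac : ∀ j : Fin m, (if j ∈ S then deriv (ψ p j) 0 else ψ p j 0)
          = (if j ∈ S then (-1:ℝ) else 1) := by
        intro j
        by_cases hjS : j ∈ S
        · rw [if_pos hjS, if_pos hjS, hdψ0]
          have hjun : j ∈ p.1 ∪ p.2 := hd.2 ▸ hjS
          rcases Finset.mem_union.mp hjun with h1 | h2
          · have h2 : j ∉ p.2 := fun h => (Finset.disjoint_left.mp hd.1) h1 h
            rw [if_pos h1, if_neg h2, if_pos h1, if_neg h2]; ring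
          · have h1 : j ∉ p.1 := fun h => (Finset.disjoint_left.mp hd.1) h h2
            rw [if_neg h1, if_pos h2, if_neg h1, if_pos h2]; ring
        · rw [if_neg hjS, if_neg hjS, hψ0]
          have hjun : j ∉ p.1 ∪ p.2 := fun h => hjS (hd.2 ▸ h)
          have h1 : j ∉ p.1 := fun h => hjun (Finset.mem_union_left _ h)
          have h2 : j ∉ p.2 := fun h => hjun (Finset.mem_union_right _ h)
          rw [if_neg h1, if_neg h2]; ring
      rw [Finset.prod_congr rfl (fun j _ => hfac j),
        Finset.prod_ite_mem Finset.univ S (fun _ => (-1:ℝ)), Finset.univ_inter,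
        Finset.prod_const, hcval]
      by_cases hex : ∃ u : Fin n, genPath n m i p.1 u v ∧ genPath n m i p.2 u w
      · rw [if_pos hex, if_pos ⟨hd.1, hd.2, hex⟩, one_mul]
      · rw [if_neg hex, if_neg (fun h => hex h.2.2), zero_mul]
    · have hzero : ∃ j0 : Fin m,
          (if j0 ∈ S then deriv (ψ p j0) 0 else ψ p j0 0) = 0 := by
        rw [not_and_or] at hd
        rcases hd with hnd | hne
        · obtain ⟨j0, hj1, hj2⟩ := Finset.not_disjoint_iff.mp hnd
          refine ⟨j0, ?_⟩
          by_cases hjS : j0 ∈ S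
          · rw [if_pos hjS, hdψ0, if_pos hj1, if_pos hj2, if_pos hj1, if_pos hj2]; ring
          · rw [if_neg hjS, hψ0, if_pos hj1, if_pos hj2]; ring
        · have : ¬ ∀ j : Fin m, (j ∈ p.1 ∪ p.2 ↔ j ∈ S) := by
            intro hall
            exact hne (Finset.ext fun a => hall a)
          obtain ⟨j0, hj0⟩ := not_forall.mp this
          refine ⟨j0, ?_⟩
          by_cases hjS : j0 ∈ S
          · have hun : j0 ∉ p.1 ∪ p.2 := by
              intro h
              exact hj0 ⟨fun _ => hjS, fun _ => h⟩
            have h1 : j0 ∉ p.1 := fun h => hun (Finset.mem_union_left _ h)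
            have h2 : j0 ∉ p.2 := fun h => hun (Finset.mem_union_right _ h)
            rw [if_pos hjS, hdψ0, if_neg h1, if_neg h2, if_neg h1, if_neg h2]; ring
          · have hun : j0 ∈ p.1 ∪ p.2 := by
              by_contra h
              exact hj0 ⟨fun hx => absurd hx h, fun hx => absurd hx hjS⟩
            rw [if_neg hjS, hψ0]
            rcases Finset.mem_union.mp hun with h1 | h2
            · rw [if_pos h1, zero_mul]
            · rw [if_pos h2, mul_zero]
      obtain ⟨j0, hj0⟩ := hzero
      rw [Finset.prod_eq_zero (Finset.mem_univ j0) hj0, mul_zero,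
        if_neg (fun h => hd ⟨h.1, h.2.1⟩)]
  rw [Finset.sum_congr rfl (fun p _ => htermval p)]
  rw [Finset.sum_ite, Finset.sum_const, Finset.sum_const_zero, add_zero,
    nsmul_eq_mul, mul_comm]

end
end

section
/- With the setup below, if 1 ≤ v ≤ n satisfies v ∉ {i₁,…,i_m}, then for all t in a sufficiently small neighborhood of 0: the Gram–Schmidt vector b_v(t) equals the v-th standard basis vector e_v of ℝⁿ, and for every w ≠ v the v-th coordinate of b_w(t) is 0. -/
open scoped Classical

noncomputable section

/-- Gram–Schmidt orthogonalization (without normalization) of a family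
`f : Fin n → ℝⁿ`:  `gs f v = f v − Σ_{k < v} (⟨f v, gs f k⟩ / ⟨gs f k, gs f k⟩) gs f k`. -/
def gs {n : ℕ} (f : Fin n → Fin n → ℝ) : Fin n → Fin n → ℝ
  | v => f v - ∑ k : Fin v.val,
      (fun b => (dotR (f v) b / dotR b b) • b) (gs f ⟨k.val, Nat.lt_trans k.isLt v.isLt⟩)
  termination_by v => v.val
  decreasing_by exact k.isLt

/-! ### Auxiliary lemmas -/

lemma gs_eq {n : ℕ} (f : Fin n → Fin n → ℝ) (v : Fin n) :
    gs f v = f v - ∑ k : Fin v.val,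
      (dotR (f v) (gs f ⟨k.val, Nat.lt_trans k.isLt v.isLt⟩) /
        dotR (gs f ⟨k.val, Nat.lt_trans k.isLt v.isLt⟩) (gs f ⟨k.val, Nat.lt_trans k.isLt v.isLt⟩)) •
        gs f ⟨k.val, Nat.lt_trans k.isLt v.isLt⟩ := by
  conv_lhs => rw [gs]

lemma dotR_single {n : ℕ} (v : Fin n) (b : Fin n → ℝ) :
    dotR (Pi.single v 1) b = b v := by
  simp [dotR, Pi.single_apply, ite_mul]

lemma gs_unused {n : ℕ} (f : Fin n → Fin n → ℝ) (v : Fin n)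
    (h1 : f v = Pi.single v 1) (h2 : ∀ w, w ≠ v → f w v = 0) :
    gs f v = Pi.single v 1 ∧ ∀ w, w ≠ v → gs f w v = 0 := by
  have key : ∀ N : ℕ, ∀ w : Fin n, w.val < N →
      (if w = v then gs f w = Pi.single v 1 else gs f w v = 0) := by
    intro N
    induction N with
    | zero => intro w hw; omega
    | succ N ih =>
      intro w hw
      have IH : ∀ k : Fin n, k.val < w.val →
          (if k = v then gs f k = Pi.single v 1 else gs f k v = 0) := by
        intro k hk; exact ih k (by omega)
      by_cases hwv : w = v
      · subst hwv
        simp only [if_pos rfl]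
        rw [gs_eq, h1]
        have hz : ∀ k : Fin w.val,
            (dotR (Pi.single w 1) (gs f ⟨k.val, Nat.lt_trans k.isLt w.isLt⟩) /
              dotR (gs f ⟨k.val, Nat.lt_trans k.isLt w.isLt⟩) (gs f ⟨k.val, Nat.lt_trans k.isLt w.isLt⟩)) •
              gs f ⟨k.val, Nat.lt_trans k.isLt w.isLt⟩ = 0 := by
          intro k
          have hkv : (⟨k.val, Nat.lt_trans k.isLt w.isLt⟩ : Fin n) ≠ w := by
            intro h; have := congrArg Fin.val h; simp at this; omega
          have := IH ⟨k.val, Nat.lt_trans k.isLt w.isLt⟩ k.isLt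
          rw [if_neg hkv] at this
          rw [dotR_single, this]
          simp
        rw [Finset.sum_congr rfl (fun k _ => hz k)]
        simp
      · rw [if_neg hwv]
        rw [gs_eq]
        have hfwv := h2 w hwv
        simp only [Pi.sub_apply, Finset.sum_apply, Pi.smul_apply, smul_eq_mul]
        rw [hfwv]
        rw [Finset.sum_eq_zero, sub_zero]
        intro k _
        set k' : Fin n := ⟨k.val, Nat.lt_trans k.isLt w.isLt⟩ with hk'
        have := IH k' k.isLt
        by_cases hkv : k' = v
        · rw [if_pos hkv] at this
          rw [this]
          rw [hkv] at *
          rw [show dotR (f w) (Pi.single v 1) = f w v by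
            simp [dotR, Pi.single_apply, mul_ite]]
          rw [hfwv]
          simp
        · rw [if_neg hkv] at this
          rw [this]; ring
  refine ⟨?_, ?_⟩
  · have := key n v v.isLt; rwa [if_pos rfl] at this
  · intro w hw; have := key n w w.isLt; rwa [if_neg hw] at this

lemma factor_mulVec {n : ℕ} (a b v : Fin n) (hb : b ≠ v) (c : ℝ) :
    ((1 : Matrix (Fin n) (Fin n) ℝ) + c • Matrix.single a b 1).mulVec (Pi.single v 1)
      = Pi.single v 1 := by
  ext u
  simp [Matrix.mulVec, dotProduct, Matrix.one_apply, Matrix.single,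
    Pi.single_apply, add_mul, ite_mul, mul_ite, Finset.sum_add_distrib, hb]

lemma factor_vecMul {n : ℕ} (a b v : Fin n) (ha : a ≠ v) (c : ℝ) :
    Matrix.vecMul (Pi.single v 1) ((1 : Matrix (Fin n) (Fin n) ℝ) + c • Matrix.single a b 1)
      = Pi.single v 1 := by
  ext u
  simp [Matrix.vecMul, dotProduct, Matrix.one_apply, Matrix.single,
    Pi.single_apply, add_mul, ite_mul, mul_ite, Finset.sum_add_distrib, ha, Ne.symm ha, eq_comm]

lemma list_mulVec {n : ℕ} (L : List (Matrix (Fin n) (Fin n) ℝ)) (x : Fin n → ℝ)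
    (h : ∀ M ∈ L, M.mulVec x = x) : L.prod.mulVec x = x := by
  induction L with
  | nil => simp [Matrix.one_mulVec]
  | cons M L ih =>
    rw [List.prod_cons, ← Matrix.mulVec_mulVec, ih (fun N hN => h N (List.mem_cons_of_mem _ hN)),
      h M (List.mem_cons_self)]

lemma list_vecMul {n : ℕ} (L : List (Matrix (Fin n) (Fin n) ℝ)) (x : Fin n → ℝ)
    (h : ∀ M ∈ L, Matrix.vecMul x M = x) : Matrix.vecMul x L.prod = x := by
  induction L with
  | nil => simp
  | cons M L ih =>
    rw [List.prod_cons, ← Matrix.vecMul_vecMul, h M (List.mem_cons_self),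
      ih (fun N hN => h N (List.mem_cons_of_mem _ hN))]

lemma Amat_mulVec {n m : ℕ} [NeZero m] (i : Fin m → Fin n) (t : Fin m → ℝ) (v : Fin n)
    (hv : ∀ j, i j ≠ v) : (Amat n m i t).mulVec (Pi.single v 1) = Pi.single v 1 := by
  apply list_mulVec
  intro M hM
  simp only [List.mem_map] at hM
  obtain ⟨j, _, rfl⟩ := hM
  exact factor_mulVec _ _ _ (hv _) _

lemma Amat_vecMul {n m : ℕ} [NeZero m] (i : Fin m → Fin n) (t : Fin m → ℝ) (v : Fin n)
    (hv : ∀ j, i j ≠ v) : Matrix.vecMul (Pi.single v 1) (Amat n m i t) = Pi.single v 1 := by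
  apply list_vecMul
  intro M hM
  simp only [List.mem_map] at hM
  obtain ⟨j, _, rfl⟩ := hM
  exact factor_vecMul _ _ _ (hv _) _

lemma Amat_zero {n m : ℕ} [NeZero m] (i : Fin m → Fin n) : Amat n m i 0 = 1 := by
  apply List.prod_eq_one
  intro M hM
  simp only [List.mem_map] at hM
  obtain ⟨j, _, rfl⟩ := hM
  simp

lemma Amat_continuous {n m : ℕ} [NeZero m] (i : Fin m → Fin n) :
    Continuous fun t : Fin m → ℝ => Amat n m i t := by
  apply continuous_list_prod
  intro j _
  exact continuous_const.add ((continuous_apply j).smul continuous_const)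

/-- **Gram–Schmidt vectors at unused indices.**  If `v ∉ {i₁,…,iₘ}`, then for all `t`
in a sufficiently small neighborhood of `0`, the Gram–Schmidt orthogonalization
`b(t)` of the columns of `A(t)⁻¹` satisfies:  `b_v(t)` is the `v`-th standard basis
vector of `ℝⁿ`, and for every `w ≠ v` the `v`-th coordinate of `b_w(t)` is `0`. -/
theorem gramSchmidt_unused_index (n m : ℕ) (hn : 1 ≤ n) [NeZero m] (i : Fin m → Fin n)
    (v : Fin n) (hv : ∀ j : Fin m, i j ≠ v) :
    ∃ U ∈ nhds (0 : Fin m → ℝ), ∀ t ∈ U,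
      gs (fun w u => (Amat n m i t)⁻¹ u w) v = Pi.single v 1 ∧
      ∀ w : Fin n, w ≠ v → gs (fun w' u => (Amat n m i t)⁻¹ u w') w v = 0 := by
  refine ⟨{t | (Amat n m i t).det ≠ 0}, ?_, ?_⟩
  · apply IsOpen.mem_nhds
    · exact isOpen_compl_singleton.preimage ((Amat_continuous i).matrix_det)
    · simp [Amat_zero]
  · intro t ht
    have h : IsUnit (Amat n m i t).det := isUnit_iff_ne_zero.mpr ht
    have hcol : ((Amat n m i t)⁻¹).mulVec (Pi.single v 1) = Pi.single v 1 := by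
      conv_lhs => rw [← Amat_mulVec i t v hv]
      rw [Matrix.mulVec_mulVec, Matrix.nonsing_inv_mul _ h, Matrix.one_mulVec]
    have hrow : Matrix.vecMul (Pi.single v 1) ((Amat n m i t)⁻¹) = Pi.single v 1 := by
      conv_lhs => rw [← Amat_vecMul i t v hv]
      rw [Matrix.vecMul_vecMul, Matrix.mul_nonsing_inv _ h, Matrix.vecMul_one]
    apply gs_unused
    · rw [← hcol]; ext u
      simp [Matrix.mulVec, dotProduct, Pi.single_apply, mul_ite]
    · intro w hw
      have := congrFun hrow w
      simp [Matrix.vecMul, dotProduct, Pi.single_apply, ite_mul, hw, Ne.symm hw] at this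
      exact this

end
end

section
/- Order-3 summation identity: let n ≥ 3 and let α = (α₁,…,α_n) ∈ ℂⁿ satisfy Σ_{i=1}^n α_i = 0. Set β_i := α_i + (n+1)/2 − i for 1 ≤ i ≤ n. Then Σ_{a=1}^n β_a³ + 2·Σ_{1 ≤ a < b ≤ n} β_a(β_b − β_a) + Σ_{1 ≤ a < b ≤ n} (β_b − β_a)(β_b − 1) + 2·Σ_{1 ≤ a < b < c ≤ n} (β_a − β_b) = Σ_{i=1}^n α_i³ − (n/2)·Σ_{i=1}^n α_i² + (n⁴ − n²)/24. -/
open Finset in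
private lemma csum_id' (m : ℕ) : ∑ v ∈ range m, (v:ℂ) = m*(m-1)/2 := by
  induction m with
  | zero => simp
  | succ m ih => rw [Finset.sum_range_succ, ih]; push_cast; ring

open Finset in
private lemma csum_sq' (m : ℕ) : ∑ v ∈ range m, (v:ℂ)^2 = m*(m-1)*(2*m-1)/6 := by
  induction m with
  | zero => simp
  | succ m ih => rw [Finset.sum_range_succ, ih]; push_cast; ring

open Finset in
private lemma csum_cube' (m : ℕ) : ∑ v ∈ range m, (v:ℂ)^3 = m^2*(m-1)^2/4 := by
  induction m with
  | zero => simp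
  | succ m ih => rw [Finset.sum_range_succ, ih]; push_cast; ring

namespace OrderThreeAux
open Finset
variable {n : ℕ}

private lemma Ioi_eq_filter' (a : Fin n) : Ioi a = univ.filter (fun b => a < b) := by
  ext b; simp

private lemma pair_sum (f : Fin n → Fin n → ℂ) :
    ∑ p ∈ (Finset.univ : Finset (Fin n × Fin n)).filter (fun p => p.1 < p.2), f p.1 p.2
      = ∑ a : Fin n, ∑ b ∈ Ioi a, f a b := by
  rw [sum_filter, Fintype.sum_prod_type]
  exact sum_congr rfl fun a _ => by rw [Ioi_eq_filter', sum_filter]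

private lemma pair_sum' (f : Fin n → Fin n → ℂ) :
    ∑ p ∈ (Finset.univ : Finset (Fin n × Fin n)).filter (fun p => p.1 < p.2), f p.1 p.2
      = ∑ b : Fin n, ∑ a ∈ Iio b, f a b := by
  rw [sum_filter, Fintype.sum_prod_type_right]
  refine sum_congr rfl fun b _ => by
    rw [show Iio b = univ.filter (fun a => a < b) by ext a; simp, sum_filter]

private lemma pair_left (g : Fin n → ℂ) :
    ∑ p ∈ (Finset.univ : Finset (Fin n × Fin n)).filter (fun p => p.1 < p.2), g p.1
      = ∑ a : Fin n, ((n - 1 - a.val : ℕ) : ℂ) * g a := by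
  rw [pair_sum (fun a _ => g a)]
  exact sum_congr rfl fun a _ => by rw [sum_const, Fin.card_Ioi, nsmul_eq_mul]

private lemma pair_right (g : Fin n → ℂ) :
    ∑ p ∈ (Finset.univ : Finset (Fin n × Fin n)).filter (fun p => p.1 < p.2), g p.2
      = ∑ b : Fin n, (b.val : ℂ) * g b := by
  rw [pair_sum' (fun _ b => g b)]
  exact sum_congr rfl fun b _ => by rw [sum_const, Fin.card_Iio, nsmul_eq_mul]

private lemma sum_Ioi_Iio (β : Fin n → ℂ) (a : Fin n) :
    ∑ b ∈ Ioi a, β b + ∑ b ∈ Iio a, β b = (∑ b, β b) - β a := by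
  have hd : Disjoint (Ioi a) (Iio a) := by
    rw [Finset.disjoint_left]
    intro b hb hb'
    exact absurd (mem_Iio.1 hb') (not_lt.2 (mem_Ioi.1 hb).le)
  rw [← sum_union hd]
  have he : Ioi a ∪ Iio a = univ.erase a := by
    ext b; simp [lt_or_lt_iff_ne, ne_comm]
  rw [he, Finset.sum_erase_eq_sub (mem_univ a)]

private lemma pair_mul (β : Fin n → ℂ) :
    2 * ∑ p ∈ (Finset.univ : Finset (Fin n × Fin n)).filter (fun p => p.1 < p.2),
        β p.1 * β p.2
      = (∑ a, β a) * (∑ a, β a) - ∑ a, β a * β a := by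
  rw [two_mul]
  nth_rewrite 1 [pair_sum (fun a b => β a * β b)]
  nth_rewrite 1 [pair_sum' (fun a b => β a * β b)]
  rw [sum_congr rfl (fun a (_ : a ∈ univ) => (mul_sum (Ioi a) β (β a)).symm),
      sum_congr rfl (fun b (_ : b ∈ univ) =>
        show ∑ a ∈ Iio b, β a * β b = β b * ∑ a ∈ Iio b, β a by
          rw [← sum_mul, mul_comm]),
      ← sum_add_distrib]
  rw [sum_congr rfl (fun a (_ : a ∈ univ) =>
    show β a * (∑ b ∈ Ioi a, β b) + β a * (∑ b ∈ Iio a, β b)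
        = β a * (∑ b, β b) - β a * β a by
      rw [← mul_add, sum_Ioi_Iio, mul_sub])]
  rw [sum_sub_distrib, ← sum_mul]

private lemma triple_sum (f : Fin n → Fin n → ℂ) :
    ∑ p ∈ (Finset.univ : Finset (Fin n × Fin n × Fin n)).filter
        (fun p => p.1 < p.2.1 ∧ p.2.1 < p.2.2), f p.1 p.2.1
      = ∑ a : Fin n, ∑ b ∈ Ioi a, ((n - 1 - b.val : ℕ) : ℂ) * f a b := by
  rw [sum_filter, Fintype.sum_prod_type]
  refine sum_congr rfl fun a _ => ?_
  rw [Fintype.sum_prod_type, Ioi_eq_filter' a, sum_filter]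
  refine sum_congr rfl fun b _ => ?_
  by_cases h : a < b
  · simp only [h, true_and, if_true]
    rw [show (∑ c, if b < c then f a b else 0) = ∑ c ∈ Ioi b, f a b by
          rw [Ioi_eq_filter', sum_filter],
        sum_const, Fin.card_Ioi, nsmul_eq_mul]
  · simp [h]

private lemma sum_Ioi_K (a : Fin n) :
    ∑ b ∈ Ioi a, ((n - 1 - b.val : ℕ) : ℂ)
      = ((n - 1 - a.val : ℕ) : ℂ) * (((n - 1 - a.val : ℕ) : ℂ) - 1) / 2 := by
  have h1 : ∑ b ∈ Ioi a, ((n - 1 - b.val : ℕ) : ℂ)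
      = ∑ k ∈ Finset.Ioc (a.val) (n-1), ((n - 1 - k : ℕ) : ℂ) := by
    rw [show Finset.Ioc (a.val) (n-1) = Finset.Ioo (a.val) n by
      ext k; simp only [Finset.mem_Ioc, Finset.mem_Ioo]; omega]
    rw [← Fin.map_valEmbedding_Ioi, sum_map]; rfl
  have h2 : Finset.Ioc (a.val) (n-1) = Finset.Ico (a.val+1) ((n-1)+1) := by
    ext k; simp only [Finset.mem_Ioc, Finset.mem_Ico]; omega
  have h3 := Finset.sum_Ico_reflect (fun j => ((j : ℕ) : ℂ)) (a.val+1)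
      (le_refl ((n-1)+1))
  have h4 : (n-1)+1-((n-1)+1) = 0 := by omega
  have h5 : (n-1)+1-(a.val+1) = n-1-a.val := by have := a.isLt; omega
  rw [h1, h2, h3, h4, h5, Nat.Ico_zero_eq_range, csum_id']

private lemma triple_red (β : Fin n → ℂ) :
    ∑ p ∈ (Finset.univ : Finset (Fin n × Fin n × Fin n)).filter
        (fun p => p.1 < p.2.1 ∧ p.2.1 < p.2.2), (β p.1 - β p.2.1)
      = ∑ a : Fin n, (((n - 1 - a.val : ℕ) : ℂ) * (((n - 1 - a.val : ℕ) : ℂ) - 1) / 2) * β a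
        - ∑ b : Fin n, (b.val : ℂ) * (((n - 1 - b.val : ℕ) : ℂ) * β b) := by
  rw [triple_sum (fun a b => β a - β b)]
  rw [sum_congr rfl (fun a (_ : a ∈ univ) =>
    show ∑ b ∈ Ioi a, ((n-1-b.val:ℕ):ℂ) * (β a - β b)
        = (∑ b ∈ Ioi a, ((n-1-b.val:ℕ):ℂ)) * β a
          - ∑ b ∈ Ioi a, ((n-1-b.val:ℕ):ℂ) * β b by
      rw [sum_mul, ← sum_sub_distrib]
      exact sum_congr rfl fun b _ => by ring)]
  rw [sum_sub_distrib]
  rw [sum_congr rfl (fun a (_ : a ∈ univ) => by rw [sum_Ioi_K a] :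
        ∀ a ∈ univ, (∑ b ∈ Ioi a, ((n-1-b.val:ℕ):ℂ)) * β a
          = (((n - 1 - a.val : ℕ) : ℂ) * (((n - 1 - a.val : ℕ) : ℂ) - 1) / 2) * β a)]
  rw [← pair_sum (fun _ b => ((n-1-b.val:ℕ):ℂ) * β b),
      pair_right (fun b => ((n-1-b.val:ℕ):ℂ) * β b)]

end OrderThreeAux

open OrderThreeAux Finset in
/-- **Order-3 summation identity.**  Let `n ≥ 3`, `Σᵢ αᵢ = 0`, and
`βᵢ = αᵢ + (n+1)/2 − i` (with `i` running from `1` to `n`).  Then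
`Σₐ βₐ³ + 2 Σ_{a<b} βₐ(β_b − βₐ) + Σ_{a<b} (β_b − βₐ)(β_b − 1)
  + 2 Σ_{a<b<c} (βₐ − β_b) = Σᵢ αᵢ³ − (n/2) Σᵢ αᵢ² + (n⁴ − n²)/24`. -/
theorem order_three_summation_identity (n : ℕ) (hn : 3 ≤ n)
    (α β : Fin n → ℂ) (hα : ∑ i : Fin n, α i = 0)
    (hβ : ∀ i : Fin n, β i = α i + ((n : ℂ) + 1) / 2 - ((i : ℕ) + 1)) :
    (∑ a : Fin n, (β a) ^ 3) +
      2 * (∑ p ∈ (Finset.univ : Finset (Fin n × Fin n)).filter (fun p => p.1 < p.2),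
        β p.1 * (β p.2 - β p.1)) +
      (∑ p ∈ (Finset.univ : Finset (Fin n × Fin n)).filter (fun p => p.1 < p.2),
        (β p.2 - β p.1) * (β p.2 - 1)) +
      2 * (∑ p ∈ (Finset.univ : Finset (Fin n × Fin n × Fin n)).filter
          (fun p => p.1 < p.2.1 ∧ p.2.1 < p.2.2),
        (β p.1 - β p.2.1)) =
      (∑ i : Fin n, (α i) ^ 3) - ((n : ℂ) / 2) * (∑ i : Fin n, (α i) ^ 2) +
        ((n : ℂ) ^ 4 - (n : ℂ) ^ 2) / 24 := by
  have hK : ∀ a : Fin n, ((n - 1 - a.val : ℕ) : ℂ) = (n : ℂ) - 1 - (a.val : ℂ) := by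
    intro a
    have h := a.isLt
    rw [Nat.cast_sub (by omega), Nat.cast_sub (by omega), Nat.cast_one]
  -- sum of β is zero
  have hβ0 : ∑ a : Fin n, β a = 0 := by
    have h1 : ∑ a : Fin n, β a
        = (∑ a : Fin n, α a) + ((∑ _a : Fin n, (((n:ℂ)+1)/2)) - ∑ a : Fin n, ((a.val:ℂ)+1)) := by
      rw [← sum_sub_distrib, ← sum_add_distrib]
      exact sum_congr rfl fun a _ => by rw [hβ a]; ring
    rw [h1, hα, sum_const, card_univ, Fintype.card_fin, nsmul_eq_mul,
        Fin.sum_univ_eq_sum_range (fun v => ((v:ℂ)+1)) n, sum_add_distrib, csum_id',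
        sum_const, card_range, nsmul_eq_mul, mul_one]
    ring
  -- reduction of the three non-cubic sums
  have eqA : (∑ p ∈ (Finset.univ : Finset (Fin n × Fin n)).filter (fun p => p.1 < p.2),
        β p.1 * (β p.2 - β p.1))
      = (∑ p ∈ (Finset.univ : Finset (Fin n × Fin n)).filter (fun p => p.1 < p.2),
          β p.1 * β p.2)
        - ∑ a : Fin n, ((n - 1 - a.val : ℕ) : ℂ) * β a ^ 2 := by
    rw [sum_congr rfl (fun p (_ : p ∈ (Finset.univ : Finset (Fin n × Fin n)).filter
          (fun p => p.1 < p.2)) => show β p.1 * (β p.2 - β p.1)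
            = β p.1 * β p.2 - β p.1 ^ 2 by ring),
        sum_sub_distrib, pair_left (fun a => β a ^ 2)]
  have eqB : (∑ p ∈ (Finset.univ : Finset (Fin n × Fin n)).filter (fun p => p.1 < p.2),
        (β p.2 - β p.1) * (β p.2 - 1))
      = ((∑ b : Fin n, (b.val : ℂ) * β b ^ 2)
          - (∑ p ∈ (Finset.univ : Finset (Fin n × Fin n)).filter (fun p => p.1 < p.2),
              β p.1 * β p.2))
        - ((∑ b : Fin n, (b.val : ℂ) * β b)
          - ∑ a : Fin n, ((n - 1 - a.val : ℕ) : ℂ) * β a) := by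
    rw [sum_congr rfl (fun p (_ : p ∈ (Finset.univ : Finset (Fin n × Fin n)).filter
          (fun p => p.1 < p.2)) => show (β p.2 - β p.1) * (β p.2 - 1)
            = (β p.2 ^ 2 - β p.1 * β p.2) - (β p.2 - β p.1) by ring),
        sum_sub_distrib, sum_sub_distrib, sum_sub_distrib,
        pair_right (fun b => β b ^ 2), pair_right β, pair_left β]
  have eqT := triple_red β
  have eqX := pair_mul β
  -- pointwise identity and final summation
  have hg : ∀ a : Fin n,
      β a ^ 3 - β a * β a / 2 - 2 * (((n - 1 - a.val : ℕ) : ℂ) * β a ^ 2)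
        + (a.val : ℂ) * β a ^ 2 - (a.val : ℂ) * β a + ((n - 1 - a.val : ℕ) : ℂ) * β a
        + 2 * ((((n - 1 - a.val : ℕ) : ℂ) * (((n - 1 - a.val : ℕ) : ℂ) - 1) / 2) * β a)
        - 2 * ((a.val : ℂ) * (((n - 1 - a.val : ℕ) : ℂ) * β a))
      = α a ^ 3 - ((n : ℂ) / 2) * α a ^ 2 + ((1 - (n : ℂ) ^ 2) / 4) * α a
        + ((-1/4 + 5/8 * (n:ℂ) - 1/2 * (n:ℂ)^2 + 1/8 * (n:ℂ)^3)
            + (-1 + 2*(n:ℂ) - (n:ℂ)^2) * (a.val : ℂ)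
            + (-3/2 + 2*(n:ℂ)) * (a.val : ℂ)^2 - (a.val : ℂ)^3) := by
    intro a
    rw [hK a, hβ a]
    ring
  have hCsum : ∑ a : Fin n,
      ((-1/4 + 5/8 * (n:ℂ) - 1/2 * (n:ℂ)^2 + 1/8 * (n:ℂ)^3)
        + (-1 + 2*(n:ℂ) - (n:ℂ)^2) * (a.val : ℂ)
        + (-3/2 + 2*(n:ℂ)) * (a.val : ℂ)^2 - (a.val : ℂ)^3)
      = ((n:ℂ)^4 - (n:ℂ)^2) / 24 := by
    rw [Fin.sum_univ_eq_sum_range (fun v =>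
        ((-1/4 + 5/8 * (n:ℂ) - 1/2 * (n:ℂ)^2 + 1/8 * (n:ℂ)^3)
          + (-1 + 2*(n:ℂ) - (n:ℂ)^2) * (v : ℂ)
          + (-3/2 + 2*(n:ℂ)) * (v : ℂ)^2 - (v : ℂ)^3)) n]
    simp only [sum_sub_distrib, sum_add_distrib, ← mul_sum, csum_id', csum_sq',
      csum_cube', sum_const, card_range, nsmul_eq_mul]
    ring
  have hmerge : ∑ a : Fin n,
      (β a ^ 3 - β a * β a / 2 - 2 * (((n - 1 - a.val : ℕ) : ℂ) * β a ^ 2)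
        + (a.val : ℂ) * β a ^ 2 - (a.val : ℂ) * β a + ((n - 1 - a.val : ℕ) : ℂ) * β a
        + 2 * ((((n - 1 - a.val : ℕ) : ℂ) * (((n - 1 - a.val : ℕ) : ℂ) - 1) / 2) * β a)
        - 2 * ((a.val : ℂ) * (((n - 1 - a.val : ℕ) : ℂ) * β a)))
      = (∑ a : Fin n, β a ^ 3) - (∑ a : Fin n, β a * β a) / 2
        - 2 * (∑ a : Fin n, ((n - 1 - a.val : ℕ) : ℂ) * β a ^ 2)
        + (∑ a : Fin n, (a.val : ℂ) * β a ^ 2)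
        - (∑ a : Fin n, (a.val : ℂ) * β a)
        + (∑ a : Fin n, ((n - 1 - a.val : ℕ) : ℂ) * β a)
        + 2 * (∑ a : Fin n, (((n - 1 - a.val : ℕ) : ℂ) * (((n - 1 - a.val : ℕ) : ℂ) - 1) / 2) * β a)
        - 2 * (∑ a : Fin n, (a.val : ℂ) * (((n - 1 - a.val : ℕ) : ℂ) * β a)) := by
    simp only [sum_sub_distrib, sum_add_distrib, ← mul_sum, ← sum_div]
  have hbig : ∑ a : Fin n,
      (β a ^ 3 - β a * β a / 2 - 2 * (((n - 1 - a.val : ℕ) : ℂ) * β a ^ 2)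
        + (a.val : ℂ) * β a ^ 2 - (a.val : ℂ) * β a + ((n - 1 - a.val : ℕ) : ℂ) * β a
        + 2 * ((((n - 1 - a.val : ℕ) : ℂ) * (((n - 1 - a.val : ℕ) : ℂ) - 1) / 2) * β a)
        - 2 * ((a.val : ℂ) * (((n - 1 - a.val : ℕ) : ℂ) * β a)))
      = (∑ i : Fin n, (α i) ^ 3) - ((n : ℂ) / 2) * (∑ i : Fin n, (α i) ^ 2) +
          ((n : ℂ) ^ 4 - (n : ℂ) ^ 2) / 24 := by
    rw [sum_congr rfl fun a _ => hg a, sum_add_distrib, sum_add_distrib,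
        sum_sub_distrib, hCsum, ← mul_sum, ← mul_sum, hα]
    ring
  have hfinal := hmerge.symm.trans hbig
  linear_combination (2:ℂ) * eqA + eqB + 2 * eqT + eqX / 2 + hfinal
    + ((∑ a : Fin n, β a) / 2) * hβ0
end
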